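/- arXiv:1001.2180 — 7 statements merged into one kernel-verified Lean document; each statement's English description precedes it below -/
import Mathlib

section
/- For every positive integer n and every partition λ of n, the transition probabilities of the q-Plancherel growth process sum to 1: ∑_{Λ: λ↗Λ} p_q(λ,Λ) = 1, where p_q(λ,Λ) = q^{b(Λ)-b(λ)} · (∏_{□∈λ} {h(□)}_q)/(∏_{□∈Λ} {h(□)}_q), the sum being over all Young diagrams Λ obtained from λ by adding one box. -/
open scoped BigOperators

/-- The hook length of the cell `c = (i,j)` of a Young diagram `μ` (0-indexed). -/
def hookLen (μ : YoungDiagram) (c : ℕ × ℕ) : ℕ :=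
  μ.rowLen c.1 + μ.colLen c.2 - c.1 - c.2 - 1

/-- The `q`-analog `{m}_q = (q^m - 1)/(q - 1)`. -/
noncomputable def qint (q : ℝ) (m : ℕ) : ℝ := (q ^ m - 1) / (q - 1)

/-- The statistic `b(λ) = ∑_{i ≥ 1} (i-1) λ_i`. -/
def bstat (μ : YoungDiagram) : ℕ := ∑ c ∈ μ.cells, c.1

/-- The transition probability of the `q`-Plancherel growth process,
`p_q(λ,Λ) = q^{b(Λ)-b(λ)} ∏_{□∈λ}{h(□)}_q / ∏_{□∈Λ}{h(□)}_q`. -/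
noncomputable def qTransition (q : ℝ) (μ Λ : YoungDiagram) : ℝ :=
  q ^ ((bstat Λ : ℤ) - (bstat μ : ℤ)) *
    (∏ c ∈ μ.cells, qint q (hookLen μ c)) / ∏ c ∈ Λ.cells, qint q (hookLen Λ c)

/-!
Write `ℓ` for the number of rows of `λ` and `β_i = λ_i + ℓ - i` (`0 ≤ i ≤ ℓ`) for its
beta-numbers, so that `β_0 > ⋯ > β_ℓ = 0`. Adding a box to row `r` raises `β_r` by one and
changes only the hooks in row `r` and in the column of the new box. Since the hooks of row `r`
together with the differences `β_r - β_i`, `i > r`, fill `{1, …, β_r}`, the hook products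
telescope to
  `p_q(λ, λ + □_r) = (q - 1)/(q^{β_r+1} - 1) ∏_{j ≠ r} (q^{β_r+1} - q^{β_j})/(q^{β_r} - q^{β_j})`.
This expression vanishes when row `r` is not addable (then `β_{r-1} = β_r + 1`), so the sum of
the transition probabilities is its sum over all `r ≤ ℓ`, which is `1` by Lagrange
interpolation of `∏_{j < ℓ} (q z - q^{β_j})` at the nodes `q^{β_j}`, evaluated at `z = 0`.
-/

open Finset Polynomial

section Interpolation

variable {F : Type*} [Field F] {ι : Type*} [DecidableEq ι]

theorem Lagrange.eval_eq_eval_nodal_mul_sum {s : Finset ι} {v : ι → F} (hvs : Set.InjOn v s)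
    {f : F[X]} (hf : f.degree < #s) {x : F} (hx : ∀ i ∈ s, x ≠ v i) :
    f.eval x = (Lagrange.nodal s v).eval x *
      ∑ i ∈ s, Lagrange.nodalWeight s v i * (x - v i)⁻¹ * f.eval (v i) := by
  conv_lhs => rw [Lagrange.eq_interpolate hvs hf]
  exact Lagrange.eval_interpolate_not_at_node _ hx

def transitionWeight (t : F) (v : ι → F) (s : Finset ι) (r : ι) : F :=
  (t - 1) / (t * v r - 1) * ∏ j ∈ s.erase r, (t * v r - v j) / (v r - v j)

/-- Partial fractions of `∏_{j ≠ b} (t z - v_j) / ∏_j (z - v_j)` at `z = 0`. -/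
theorem sum_transitionWeight_eq_one {s : Finset ι} {v : ι → F} (hvs : Set.InjOn v s)
    (hv0 : ∀ j ∈ s, v j ≠ 0) {t : F} (ht : ∀ j ∈ s, t * v j ≠ 1) {b : ι} (hb : b ∈ s)
    (hvb : v b = 1) : ∑ r ∈ s, transitionWeight t v s r = 1 := by
  set f : F[X] := ∏ j ∈ s.erase b, (C t * X - C (v j)) with hf_def
  have hf : ∀ z, f.eval z = ∏ j ∈ s.erase b, (t * z - v j) := fun z => by
    simp [hf_def, eval_prod]
  have hdeg : f.degree < #s := by
    have hlin : ∀ j ∈ s.erase b, (C t * X - C (v j)).natDegree ≤ 1 := fun j _ => by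
      compute_degree
    have hnat : f.natDegree ≤ #(s.erase b) := by
      simpa using (natDegree_prod_le _ _).trans (sum_le_card_nsmul _ _ _ hlin)
    calc f.degree ≤ f.natDegree := degree_le_natDegree
      _ ≤ #(s.erase b) := by exact_mod_cast hnat
      _ < #s := by exact_mod_cast card_erase_lt_of_mem hb
  have hterm : ∀ r ∈ s, transitionWeight t v s r =
      - (Lagrange.nodalWeight s v r * (0 - v r)⁻¹ * f.eval (v r)) := by
    intro r hr
    have hsplit : (t - 1) * v r * ∏ j ∈ s.erase r, (t * v r - v j) =
        (t * v r - 1) * f.eval (v r) := by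
      calc (t - 1) * v r * ∏ j ∈ s.erase r, (t * v r - v j)
          = (t * v r - v r) * ∏ j ∈ s.erase r, (t * v r - v j) := by ring
        _ = (t * v r - v b) * ∏ j ∈ s.erase b, (t * v r - v j) := by
          rw [mul_prod_erase _ (fun j => t * v r - v j) hr,
            mul_prod_erase _ (fun j => t * v r - v j) hb]
        _ = (t * v r - 1) * f.eval (v r) := by rw [hvb, hf]
    have h1 : t * v r - 1 ≠ 0 := sub_ne_zero.mpr (ht r hr)
    have h2 := hv0 r hr
    rw [transitionWeight, Lagrange.nodalWeight, prod_div_distrib, prod_inv_distrib]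
    generalize ∏ j ∈ s.erase r, (t * v r - v j) = P at hsplit ⊢
    generalize ∏ j ∈ s.erase r, (v r - v j) = Q
    field_simp
    linear_combination (-Q⁻¹) * hsplit
  have hnodal : (Lagrange.nodal s v).eval 0 = - f.eval 0 := by
    rw [Lagrange.eval_nodal, hf, ← mul_prod_erase _ _ hb, hvb]
    simp
  have hf0 : f.eval 0 ≠ 0 := by
    rw [hf, prod_ne_zero_iff]
    intro j hj
    simpa using hv0 j (mem_of_mem_erase hj)
  have key := Lagrange.eval_eq_eval_nodal_mul_sum hvs hdeg (fun i hi => (hv0 i hi).symm)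
  rw [hnodal] at key
  rw [sum_congr rfl hterm, sum_neg_distrib]
  have hprod : f.eval 0 * ((∑ i ∈ s, Lagrange.nodalWeight s v i * (0 - v i)⁻¹ * f.eval (v i))
      + 1) = 0 := by linear_combination key
  linear_combination -(mul_eq_zero.mp hprod).resolve_left hf0

theorem transitionWeight_eq_zero {t : F} {v : ι → F} {s : Finset ι} {r j : ι} (hj : j ∈ s)
    (hjr : j ≠ r) (hvj : v j = t * v r) : transitionWeight t v s r = 0 := by
  rw [transitionWeight, prod_eq_zero (mem_erase.mpr ⟨hjr, hj⟩) (by rw [hvj, sub_self, zero_div]),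
    mul_zero]

end Interpolation

section QInt

variable {q : ℝ}

theorem qint_eq_sum_range (hq1 : q ≠ 1) (m : ℕ) : qint q m = ∑ i ∈ range m, q ^ i :=
  (geom_sum_eq hq1 m).symm

theorem qint_pos (hq0 : 0 < q) (hq1 : q ≠ 1) {m : ℕ} (hm : m ≠ 0) : 0 < qint q m := by
  rw [qint_eq_sum_range hq1]
  exact geom_sum_pos hq0.le hm

theorem qint_one (hq1 : q ≠ 1) : qint q 1 = 1 := by
  simp [qint_eq_sum_range hq1]

theorem pow_sub_pow_eq_mul_qint (hq1 : q ≠ 1) {a b : ℕ} (hba : b ≤ a) :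
    q ^ a - q ^ b = (q - 1) * q ^ b * qint q (a - b) := by
  rw [qint, mul_comm (q - 1), mul_assoc, mul_div_cancel₀ _ (sub_ne_zero.mpr hq1), mul_sub,
    ← pow_add, Nat.add_sub_cancel' hba, mul_one]

theorem prod_qint_succ_div_qint (hq0 : 0 < q) (hq1 : q ≠ 1) (n : ℕ) :
    ∏ m ∈ Icc 1 n, qint q (m + 1) / qint q m = qint q (n + 1) := by
  induction n with
  | zero => simp [qint_one hq1]
  | succ n ih =>
    rw [prod_Icc_succ_top (by omega), ih, mul_div_cancel₀ _ (qint_pos hq0 hq1 (by omega)).ne']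

theorem pow_mul_sub_pow_div_of_lt (hq0 : 0 < q) (hq1 : q ≠ 1) {a b : ℕ} (hba : b < a) :
    (q * q ^ a - q ^ b) / (q ^ a - q ^ b) = qint q (a - b + 1) / qint q (a - b) := by
  rw [← pow_succ', pow_sub_pow_eq_mul_qint hq1 (by omega : b ≤ a + 1),
    pow_sub_pow_eq_mul_qint hq1 hba.le, Nat.sub_add_comm hba.le]
  have : q - 1 ≠ 0 := sub_ne_zero.mpr hq1
  have : q ^ b ≠ 0 := pow_ne_zero _ hq0.ne'
  field_simp

theorem pow_mul_sub_pow_div_mul_of_lt (hq0 : 0 < q) (hq1 : q ≠ 1) {a b : ℕ} (hab : a + 2 ≤ b) :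
    (q * q ^ a - q ^ b) / (q ^ a - q ^ b) * (qint q (b - a) / qint q (b - a - 1)) = q := by
  rw [← pow_succ', ← neg_div_neg_eq, neg_sub, neg_sub, pow_sub_pow_eq_mul_qint hq1 (by omega),
    pow_sub_pow_eq_mul_qint hq1 (by omega : a ≤ b)]
  have : q - 1 ≠ 0 := sub_ne_zero.mpr hq1
  have : q ^ a ≠ 0 := pow_ne_zero _ hq0.ne'
  have := (qint_pos hq0 hq1 (by omega : b - a ≠ 0)).ne'
  have := (qint_pos hq0 hq1 (by omega : b - (a + 1) ≠ 0)).ne'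
  rw [pow_succ, Nat.sub_sub]
  field_simp

end QInt

namespace YoungDiagram

def IsAddableRow (μ : YoungDiagram) (r : ℕ) : Prop := r = 0 ∨ μ.rowLen r < μ.rowLen (r - 1)

instance (μ : YoungDiagram) : DecidablePred μ.IsAddableRow :=
  fun r => by unfold IsAddableRow; infer_instance

variable {μ : YoungDiagram} {r : ℕ}

theorem lt_rowLen_iff_lt_colLen {i j : ℕ} : j < μ.rowLen i ↔ i < μ.colLen j :=
  mem_iff_lt_rowLen.symm.trans mem_iff_lt_colLen

theorem rowLen_notMem (μ : YoungDiagram) (r : ℕ) : (r, μ.rowLen r) ∉ μ := by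
  simp [mem_iff_lt_rowLen]

theorem IsAddableRow.rowLen_lt (h : μ.IsAddableRow r) {i : ℕ} (hi : i < r) :
    μ.rowLen r < μ.rowLen i := by
  rcases h with rfl | h
  · omega
  · exact h.trans_le (μ.rowLen_anti i (r - 1) (by omega))

theorem IsAddableRow.colLen_rowLen (h : μ.IsAddableRow r) : μ.colLen (μ.rowLen r) = r := by
  refine le_antisymm ?_ ?_
  · by_contra! hr
    exact lt_irrefl _ (lt_rowLen_iff_lt_colLen.mpr hr)
  · by_contra! hr
    exact (lt_rowLen_iff_lt_colLen.mp (h.rowLen_lt hr)).false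

theorem IsAddableRow.le_colLen_zero (h : μ.IsAddableRow r) : r ≤ μ.colLen 0 :=
  h.colLen_rowLen ▸ μ.colLen_anti 0 _ (Nat.zero_le _)

theorem IsAddableRow.isLowerSet_insert (h : μ.IsAddableRow r) :
    IsLowerSet (↑(insert (r, μ.rowLen r) μ.cells) : Set (ℕ × ℕ)) := by
  rintro ⟨i, j⟩ ⟨i', j'⟩ ⟨hi, hj⟩ hc
  simp only [coe_insert, Set.mem_insert_iff, Finset.mem_coe, mem_cells, Prod.mk.injEq] at hc ⊢
  dsimp only at hi hj
  rcases hc with ⟨rfl, rfl⟩ | hc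
  · rw [mem_iff_lt_rowLen]
    rcases hi.lt_or_eq with hi | rfl
    · exact Or.inr (hj.trans_lt (h.rowLen_lt hi))
    · omega
  · exact Or.inr (μ.isLowerSet ⟨hi, hj⟩ hc)

/-- Equal to `μ` when row `r` is not addable. -/
def addBox (μ : YoungDiagram) (r : ℕ) : YoungDiagram :=
  if h : μ.IsAddableRow r then ⟨insert (r, μ.rowLen r) μ.cells, h.isLowerSet_insert⟩ else μ

theorem cells_addBox (h : μ.IsAddableRow r) :
    (μ.addBox r).cells = insert (r, μ.rowLen r) μ.cells := by
  rw [addBox, dif_pos h]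

theorem mem_addBox (h : μ.IsAddableRow r) {c : ℕ × ℕ} :
    c ∈ μ.addBox r ↔ c = (r, μ.rowLen r) ∨ c ∈ μ := by
  rw [← mem_cells, cells_addBox h, Finset.mem_insert, mem_cells]

theorem le_addBox (h : μ.IsAddableRow r) : μ ≤ μ.addBox r := by
  rw [← cells_subset_iff, cells_addBox h]
  exact subset_insert _ _

theorem card_addBox (h : μ.IsAddableRow r) : (μ.addBox r).card = μ.card + 1 := by
  rw [YoungDiagram.card, YoungDiagram.card, cells_addBox h, card_insert_of_notMem]
  simpa using μ.rowLen_notMem r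

theorem rowLen_eq_of_forall_mem_iff {ν : YoungDiagram} {i m : ℕ} (h : ∀ j, (i, j) ∈ ν ↔ j < m) :
    ν.rowLen i = m := by
  have := h m
  have := h (ν.rowLen i)
  simp only [mem_iff_lt_rowLen] at *
  omega

theorem colLen_eq_of_forall_mem_iff {ν : YoungDiagram} {j m : ℕ} (h : ∀ i, (i, j) ∈ ν ↔ i < m) :
    ν.colLen j = m := by
  have := h m
  have := h (ν.colLen j)
  simp only [mem_iff_lt_colLen] at *
  omega

theorem rowLen_addBox (h : μ.IsAddableRow r) (i : ℕ) :
    (μ.addBox r).rowLen i = μ.rowLen i + if i = r then 1 else 0 := by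
  refine rowLen_eq_of_forall_mem_iff fun j => ?_
  rw [mem_addBox h, mem_iff_lt_rowLen, Prod.mk.injEq]
  split_ifs with hi
  · subst hi
    omega
  · omega

theorem colLen_addBox (h : μ.IsAddableRow r) (j : ℕ) :
    (μ.addBox r).colLen j = μ.colLen j + if j = μ.rowLen r then 1 else 0 := by
  refine colLen_eq_of_forall_mem_iff fun i => ?_
  rw [mem_addBox h, mem_iff_lt_colLen, Prod.mk.injEq]
  split_ifs with hj
  · subst hj
    rw [h.colLen_rowLen]
    omega
  · omega

theorem bstat_addBox (h : μ.IsAddableRow r) : bstat (μ.addBox r) = bstat μ + r := by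
  rw [bstat, cells_addBox h, sum_insert (by simpa using μ.rowLen_notMem r), add_comm, bstat]

theorem hookLen_addBox_rowLen (h : μ.IsAddableRow r) :
    hookLen (μ.addBox r) (r, μ.rowLen r) = 1 := by
  simp only [hookLen, rowLen_addBox h, colLen_addBox h, if_pos, h.colLen_rowLen]
  omega

theorem hookLen_addBox {c : ℕ × ℕ} (h : μ.IsAddableRow r) (hc : c ∈ μ) :
    hookLen (μ.addBox r) c =
      hookLen μ c + (if c.1 = r then 1 else 0) + if c.2 = μ.rowLen r then 1 else 0 := by
  obtain ⟨i, j⟩ := c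
  have h1 := mem_iff_lt_rowLen.mp hc
  have h2 := mem_iff_lt_colLen.mp hc
  simp only [hookLen, rowLen_addBox h, colLen_addBox h]
  split_ifs <;> omega

theorem exists_isAddableRow_eq_addBox {Λ : YoungDiagram} (hle : μ ≤ Λ)
    (hcard : Λ.card = μ.card + 1) : ∃ r, μ.IsAddableRow r ∧ Λ = μ.addBox r := by
  obtain ⟨⟨a, b⟩, hc, hins⟩ := exists_eq_insert_iff.mpr ⟨cells_subset_iff.mpr hle, hcard.symm⟩
  have hmem : ∀ d, d ∈ Λ ↔ d = (a, b) ∨ d ∈ μ := fun d => by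
    rw [← mem_cells, ← hins, mem_insert, mem_cells]
  have hcΛ : (a, b) ∈ Λ := (hmem _).mpr (Or.inl rfl)
  rw [mem_cells, mem_iff_lt_rowLen, not_lt] at hc
  obtain rfl : b = μ.rowLen a := by
    refine le_antisymm (not_lt.mp fun hlt => ?_) hc
    rcases (hmem _).mp (Λ.up_left_mem le_rfl hlt.le hcΛ) with h | h
    · simp only [Prod.mk.injEq, true_and] at h
      omega
    · exact μ.rowLen_notMem a h
  have hadd : μ.IsAddableRow a := by
    refine a.eq_zero_or_pos.imp_right fun ha => ?_
    rcases (hmem _).mp (Λ.up_left_mem (Nat.sub_le a 1) le_rfl hcΛ) with h | h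
    · simp only [Prod.mk.injEq, and_true] at h
      omega
    · exact mem_iff_lt_rowLen.mp h
  exact ⟨a, hadd, YoungDiagram.ext (hins.symm.trans (cells_addBox hadd).symm)⟩

theorem addBox_injOn : Set.InjOn μ.addBox {r | μ.IsAddableRow r} := by
  intro r h r' h' he
  have := (mem_addBox h).mpr (Or.inl rfl)
  rw [he, mem_addBox h'] at this
  rcases this with he | hm
  · exact congrArg Prod.fst he
  · exact absurd hm (μ.rowLen_notMem r)

theorem hookLen_pos {c : ℕ × ℕ} (hc : c ∈ μ) : 0 < hookLen μ c := by
  have h1 := mem_iff_lt_rowLen.mp hc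
  have h2 := mem_iff_lt_colLen.mp hc
  unfold hookLen
  omega

theorem prod_hookLen_addBox {M : Type*} [CommGroupWithZero M] (g : ℕ → M)
    (hg : ∀ m, 0 < m → g m ≠ 0) (h : μ.IsAddableRow r) :
    ∏ c ∈ (μ.addBox r).cells, g (hookLen (μ.addBox r) c) =
      g 1 * (∏ c ∈ μ.cells, g (hookLen μ c)) *
        (∏ j ∈ range (μ.rowLen r), g (hookLen μ (r, j) + 1) / g (hookLen μ (r, j))) *
        ∏ i ∈ range r, g (hookLen μ (i, μ.rowLen r) + 1) / g (hookLen μ (i, μ.rowLen r)) := by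
  have hsplit : ∀ c ∈ μ.cells, g (hookLen (μ.addBox r) c) = g (hookLen μ c) *
      if c.1 = r ∨ c.2 = μ.rowLen r then g (hookLen μ c + 1) / g (hookLen μ c) else 1 := by
    rintro ⟨i, j⟩ hc
    rw [mem_cells] at hc
    have hne := hg _ (hookLen_pos hc)
    rw [hookLen_addBox h hc]
    by_cases h1 : i = r <;> by_cases h2 : j = μ.rowLen r
    · exact absurd (h1 ▸ h2 ▸ hc) (μ.rowLen_notMem _)
    all_goals simp only [h1, h2] at hne ⊢; simp [mul_div_cancel₀ _ hne]
  have hdisj : Disjoint (μ.row r) (μ.col (μ.rowLen r)) := by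
    refine disjoint_left.mpr fun ⟨i, j⟩ hr hc => μ.rowLen_notMem r ?_
    obtain ⟨hc, rfl : j = μ.rowLen r⟩ := mem_col_iff.mp hc
    obtain ⟨-, rfl : i = r⟩ := mem_row_iff.mp hr
    exact hc
  rw [cells_addBox h, prod_insert (by simpa using μ.rowLen_notMem r), hookLen_addBox_rowLen h,
    prod_congr rfl hsplit, prod_mul_distrib, ← prod_filter, filter_or, ← row, ← col,
    prod_union hdisj, row_eq_prod, col_eq_prod, h.colLen_rowLen]
  simp only [prod_product, prod_singleton, mul_assoc]

/-- `μ.colLen 0` is the number `ℓ` of rows; only `i ≤ ℓ` are used, the empty row `ℓ` giving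
`β_ℓ = 0`. -/
def betaNum (μ : YoungDiagram) (i : ℕ) : ℕ := μ.rowLen i + (μ.colLen 0 - i)

theorem rowLen_colLen_zero (μ : YoungDiagram) : μ.rowLen (μ.colLen 0) = 0 := by
  by_contra! h
  exact lt_irrefl _ (lt_rowLen_iff_lt_colLen.mp (Nat.pos_of_ne_zero h))

theorem betaNum_colLen_zero (μ : YoungDiagram) : μ.betaNum (μ.colLen 0) = 0 := by
  simp [betaNum, rowLen_colLen_zero]

theorem betaNum_lt_betaNum {i j : ℕ} (hij : i < j) (hj : j ≤ μ.colLen 0) :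
    μ.betaNum j < μ.betaNum i := by
  have := μ.rowLen_anti i j hij.le
  unfold betaNum
  omega

theorem betaNum_pred_of_not_isAddableRow (hr : r ≤ μ.colLen 0) (h : ¬ μ.IsAddableRow r) :
    μ.betaNum (r - 1) = μ.betaNum r + 1 := by
  simp only [IsAddableRow, not_or, not_lt] at h
  have := μ.rowLen_anti (r - 1) r (Nat.sub_le r 1)
  unfold betaNum
  omega

theorem IsAddableRow.hookLen_add_one (h : μ.IsAddableRow r) {i : ℕ} (hi : i < r) :
    hookLen μ (i, μ.rowLen r) + 1 = μ.betaNum i - μ.betaNum r := by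
  have := h.rowLen_lt hi
  have := h.le_colLen_zero
  simp only [hookLen, betaNum, h.colLen_rowLen]
  omega

theorem strictAntiOn_hookLen_row (μ : YoungDiagram) (r : ℕ) :
    StrictAntiOn (fun j => hookLen μ (r, j)) (Set.Iio (μ.rowLen r)) := by
  intro j hj j' hj' hjj'
  rw [Set.mem_Iio] at hj hj'
  have := lt_rowLen_iff_lt_colLen.mp hj
  have := lt_rowLen_iff_lt_colLen.mp hj'
  have := μ.colLen_anti j j' hjj'.le
  simp only [hookLen]
  omega

/-- `h(r,j) = β_r - β_i` would force `λ'_j - i = j + 1 - λ_i`, whose two sides have opposite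
signs according as `(i,j) ∈ μ` or not. -/
theorem hookLen_ne_betaNum_sub {i j : ℕ} (hj : j < μ.rowLen r) (hri : r < i) :
    hookLen μ (r, j) ≠ μ.betaNum r - μ.betaNum i := by
  have := lt_rowLen_iff_lt_colLen.mp hj
  have := μ.colLen_anti 0 j (Nat.zero_le j)
  have := μ.rowLen_anti r i hri.le
  have := lt_rowLen_iff_lt_colLen (μ := μ) (i := i) (j := j)
  simp only [hookLen, betaNum]
  omega

theorem prod_hookLen_row_mul_prod_betaNum_sub {M : Type*} [CommMonoid M] (g : ℕ → M)
    (hr : r ≤ μ.colLen 0) :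
    (∏ j ∈ range (μ.rowLen r), g (hookLen μ (r, j))) *
        ∏ i ∈ Ioc r (μ.colLen 0), g (μ.betaNum r - μ.betaNum i) =
      ∏ m ∈ Icc 1 (μ.betaNum r), g m := by
  have hinj₁ : Set.InjOn (fun j => hookLen μ (r, j)) (range (μ.rowLen r)) := by
    rw [coe_range]
    exact (strictAntiOn_hookLen_row μ r).injOn
  have hinj₂ : Set.InjOn (fun i => μ.betaNum r - μ.betaNum i) (Ioc r (μ.colLen 0)) := by
    refine StrictMonoOn.injOn fun i hi i' hi' hii' => ?_
    simp only [coe_Ioc, Set.mem_Ioc] at hi hi'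
    have := betaNum_lt_betaNum hii' hi'.2
    have := betaNum_lt_betaNum hi.1 hi.2
    omega
  have hdisj : Disjoint ((range (μ.rowLen r)).image fun j => hookLen μ (r, j))
      ((Ioc r (μ.colLen 0)).image fun i => μ.betaNum r - μ.betaNum i) := by
    simp only [disjoint_left, mem_image, mem_range, mem_Ioc, not_exists, not_and]
    rintro _ ⟨j, hj, rfl⟩ i ⟨hri, -⟩
    exact (hookLen_ne_betaNum_sub hj hri).symm
  have hunion : ((range (μ.rowLen r)).image fun j => hookLen μ (r, j)) ∪
      ((Ioc r (μ.colLen 0)).image fun i => μ.betaNum r - μ.betaNum i) =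
        Icc 1 (μ.betaNum r) := by
    refine eq_of_subset_of_card_le (union_subset ?_ ?_) ?_
    · simp only [subset_iff, mem_image, mem_range, mem_Icc]
      rintro _ ⟨j, hj, rfl⟩
      have := lt_rowLen_iff_lt_colLen.mp hj
      have := μ.colLen_anti 0 j (Nat.zero_le j)
      simp only [hookLen, betaNum]
      omega
    · simp only [subset_iff, mem_image, mem_Ioc, mem_Icc]
      rintro _ ⟨i, ⟨hri, hi⟩, rfl⟩
      have := betaNum_lt_betaNum hri hi
      omega
    · rw [card_union_of_disjoint hdisj, card_image_of_injOn hinj₁, card_image_of_injOn hinj₂,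
        Nat.card_Icc, card_range, Nat.card_Ioc, betaNum]
      omega
  rw [← prod_image hinj₁, ← prod_image hinj₂, ← prod_union hdisj, hunion]

def addableRows (μ : YoungDiagram) : Finset ℕ := (range (μ.colLen 0 + 1)).filter μ.IsAddableRow

theorem tsum_covers_eq_sum_addBox {α : Type*} [AddCommMonoid α] [TopologicalSpace α]
    (f : YoungDiagram → α) :
    ∑' Λ : {Λ : YoungDiagram // μ ≤ Λ ∧ Λ.card = μ.card + 1}, f Λ =
      ∑ r ∈ μ.addableRows, f (μ.addBox r) := by
  classical
  have hcov : ∀ Λ, Λ ∈ μ.addableRows.image μ.addBox ↔ μ ≤ Λ ∧ Λ.card = μ.card + 1 := by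
    intro Λ
    simp only [mem_image, addableRows, mem_filter, mem_range]
    constructor
    · rintro ⟨r, ⟨-, h⟩, rfl⟩
      exact ⟨le_addBox h, card_addBox h⟩
    · rintro ⟨hle, hcard⟩
      obtain ⟨r, h, rfl⟩ := exists_isAddableRow_eq_addBox hle hcard
      exact ⟨r, ⟨Nat.lt_succ_of_le h.le_colLen_zero, h⟩, rfl⟩
  rw [← (Equiv.subtypeEquivRight hcov).tsum_eq]
  exact (Finset.tsum_subtype _ f).trans
    (sum_image (addBox_injOn.mono fun r hr => (mem_filter.mp hr).2))

end YoungDiagram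

open YoungDiagram

section QPlancherel

variable {q : ℝ} {μ : YoungDiagram} {r : ℕ}

theorem prod_betaNum_factor_mul_prod_hookLen_ratio_col (hq0 : 0 < q) (hq1 : q ≠ 1)
    (h : μ.IsAddableRow r) :
    (∏ i ∈ range r,
        (q * q ^ μ.betaNum r - q ^ μ.betaNum i) / (q ^ μ.betaNum r - q ^ μ.betaNum i)) *
      ∏ i ∈ range r, qint q (hookLen μ (i, μ.rowLen r) + 1) / qint q (hookLen μ (i, μ.rowLen r)) =
      q ^ r := by
  rw [← prod_mul_distrib, ← card_range r, ← prod_const q, card_range]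
  refine prod_congr rfl fun i hi => ?_
  have hi := mem_range.mp hi
  have := hookLen_pos (mem_iff_lt_rowLen.mpr (h.rowLen_lt hi))
  have e := h.hookLen_add_one hi
  rw [e, show hookLen μ (i, μ.rowLen r) = μ.betaNum i - μ.betaNum r - 1 by omega]
  exact pow_mul_sub_pow_div_mul_of_lt hq0 hq1 (by omega)

theorem prod_hookLen_ratio_row_mul_prod_betaNum_factor (hq0 : 0 < q) (hq1 : q ≠ 1)
    (hr : r ≤ μ.colLen 0) :
    (∏ j ∈ range (μ.rowLen r), qint q (hookLen μ (r, j) + 1) / qint q (hookLen μ (r, j))) *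
      ∏ i ∈ Ioc r (μ.colLen 0),
        (q * q ^ μ.betaNum r - q ^ μ.betaNum i) / (q ^ μ.betaNum r - q ^ μ.betaNum i) =
      qint q (μ.betaNum r + 1) := by
  rw [← prod_qint_succ_div_qint hq0 hq1,
    ← prod_hookLen_row_mul_prod_betaNum_sub (fun m => qint q (m + 1) / qint q m) hr]
  congr 1
  refine prod_congr rfl fun i hi => ?_
  obtain ⟨hri, hi⟩ := mem_Ioc.mp hi
  exact pow_mul_sub_pow_div_of_lt hq0 hq1 (betaNum_lt_betaNum hri hi)

theorem qTransition_addBox (hq0 : 0 < q) (hq1 : q ≠ 1) (h : μ.IsAddableRow r) :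
    qTransition q μ (μ.addBox r) =
      transitionWeight q (fun i => q ^ μ.betaNum i) (range (μ.colLen 0 + 1)) r := by
  have hqint : ∀ m, 0 < m → qint q m ≠ 0 := fun m hm => (qint_pos hq0 hq1 hm.ne').ne'
  have hr := h.le_colLen_zero
  have hbelow := prod_betaNum_factor_mul_prod_hookLen_ratio_col hq0 hq1 h
  have habove := prod_hookLen_ratio_row_mul_prod_betaNum_factor hq0 hq1 hr
  have hP : ∏ c ∈ μ.cells, qint q (hookLen μ c) ≠ 0 :=
    prod_ne_zero_iff.mpr fun c hc => hqint _ (hookLen_pos ((mem_cells c).mp hc))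
  have hβ : q * q ^ μ.betaNum r - 1 ≠ 0 := by
    have := hqint (μ.betaNum r + 1) (Nat.succ_pos _)
    rw [qint, pow_succ'] at this
    exact (div_ne_zero_iff.mp this).1
  have herase : (range (μ.colLen 0 + 1)).erase r = range r ∪ Ioc r (μ.colLen 0) := by
    ext i
    simp only [mem_erase, mem_range, mem_union, mem_Ioc]
    omega
  have hdisj : Disjoint (range r) (Ioc r (μ.colLen 0)) := by
    simp only [disjoint_left, mem_range, mem_Ioc]
    omega
  rw [transitionWeight, herase, prod_union hdisj, qTransition, bstat_addBox h,
    prod_hookLen_addBox (qint q) hqint h, qint_one hq1, Nat.cast_add, add_sub_cancel_left,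
    zpow_natCast]
  generalize ∏ c ∈ μ.cells, qint q (hookLen μ c) = P at hP ⊢
  generalize ∏ j ∈ range (μ.rowLen r), qint q (hookLen μ (r, j) + 1) / qint q (hookLen μ (r, j))
    = Rrow at habove ⊢
  generalize ∏ i ∈ range r,
    qint q (hookLen μ (i, μ.rowLen r) + 1) / qint q (hookLen μ (i, μ.rowLen r)) = Rcol at hbelow ⊢
  have hRcol : Rcol ≠ 0 := right_ne_zero_of_mul (hbelow ▸ pow_ne_zero r hq0.ne')
  have hRrow : Rrow ≠ 0 := left_ne_zero_of_mul (habove ▸ hqint _ (Nat.succ_pos _))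
  rw [eq_div_of_mul_eq hRcol hbelow, eq_div_of_mul_eq hRrow ((mul_comm _ _).trans habove), qint,
    pow_succ']
  have : q - 1 ≠ 0 := sub_ne_zero.mpr hq1
  field_simp

theorem sum_transitionWeight_pow_betaNum (hq0 : 0 < q) (hq1 : q ≠ 1) (μ : YoungDiagram) :
    ∑ r ∈ range (μ.colLen 0 + 1),
      transitionWeight q (fun i => q ^ μ.betaNum i) (range (μ.colLen 0 + 1)) r = 1 := by
  have hinj : Set.InjOn μ.betaNum (range (μ.colLen 0 + 1)) := by
    refine StrictAntiOn.injOn fun i _ j hj hij => betaNum_lt_betaNum hij ?_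
    simpa [Nat.lt_succ_iff] using hj
  refine sum_transitionWeight_eq_one ((pow_right_injective₀ hq0 hq1).comp_injOn hinj)
    (fun j _ => pow_ne_zero _ hq0.ne') (fun j _ => ?_) (self_mem_range_succ (μ.colLen 0)) ?_
  · show q * q ^ μ.betaNum j ≠ 1
    rw [← pow_succ', ← pow_zero q]
    exact fun he => Nat.succ_ne_zero _ (pow_right_injective₀ hq0 hq1 he)
  · simp [betaNum_colLen_zero]

theorem transitionWeight_pow_betaNum_eq_zero (q : ℝ) (hr : r ≤ μ.colLen 0)
    (h : ¬ μ.IsAddableRow r) :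
    transitionWeight q (fun i => q ^ μ.betaNum i) (range (μ.colLen 0 + 1)) r = 0 := by
  have hr0 : r ≠ 0 := fun hr0 => h (Or.inl hr0)
  refine transitionWeight_eq_zero (j := r - 1) (by simp only [mem_range]; omega) (by omega) ?_
  simp only [betaNum_pred_of_not_isAddableRow hr h, pow_succ']

end QPlancherel

theorem stmt_3_general (q : ℝ) (hq0 : 0 < q) (hq1 : q ≠ 1)
    (μ : YoungDiagram) :
    ∑' Λ : {Λ : YoungDiagram // μ ≤ Λ ∧ Λ.card = μ.card + 1},
      qTransition q μ (Λ : YoungDiagram) = 1 := by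
  rw [tsum_covers_eq_sum_addBox, ← sum_transitionWeight_pow_betaNum hq0 hq1 μ]
  refine sum_subset_zero_on_sdiff (filter_subset _ _) (fun r hr => ?_) fun r hr => ?_
  · obtain ⟨hr, hna⟩ := mem_sdiff.mp hr
    rw [addableRows, mem_filter, not_and] at hna
    exact transitionWeight_pow_betaNum_eq_zero q (Nat.lt_succ_iff.mp (mem_range.mp hr)) (hna hr)
  · exact qTransition_addBox hq0 hq1 (mem_filter.mp hr).2

/-- For every positive real `q ≠ 1`, every `n ≥ 1` and every Young diagram `λ` of size `n`,
the transition probabilities of the `q`-Plancherel growth process sum to `1` over all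
Young diagrams `Λ` obtained from `λ` by adding one box. -/
theorem stmt_3 (q : ℝ) (hq0 : 0 < q) (hq1 : q ≠ 1) (n : ℕ) (hn : 0 < n)
    (μ : YoungDiagram) (hμ : μ.card = n) :
    ∑' Λ : {Λ : YoungDiagram // μ ≤ Λ ∧ Λ.card = μ.card + 1},
      qTransition q μ (Λ : YoungDiagram) = 1 :=
  stmt_3_general q hq0 hq1 μ
end

section
/- The q-Plancherel measure satisfies M_{n,q^{-1}}(λ') = M_{n,q}(λ) for every partition λ of n, where λ' is the conjugate partition. -/
open scoped BigOperators

/-- The number of standard Young tableaux of shape `μ`. -/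
noncomputable def dimSYT (μ : YoungDiagram) : ℕ :=
  Nat.card {T : μ.cells ≃ Fin μ.card //
    ∀ c d : μ.cells, (c : ℕ × ℕ).1 ≤ (d : ℕ × ℕ).1 → (c : ℕ × ℕ).2 ≤ (d : ℕ × ℕ).2 →
      c ≠ d → (T c : ℕ) < (T d : ℕ)}

/-- The `q`-Plancherel measure `M_{n,q}(λ) = q^{b(λ)} (dim λ) / ∏_{□∈λ} {h(□)}_q`. -/
noncomputable def qPlancherel (q : ℝ) (μ : YoungDiagram) : ℝ :=
  q ^ bstat μ * (dimSYT μ : ℝ) / ∏ c ∈ μ.cells, qint q (hookLen μ c)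

/-!
Transposition swaps the coordinates of cells; it preserves hook lengths and, since the
tableau condition is symmetric in the two coordinates, the number of standard tableaux.
Using `{m}_{1/q} = q^{1-m} {m}_q`, the hook product of `λ'` at `1/q` is `q^{n - ∑ h}` times
the hook product of `λ` at `q`. Writing each hook as `arm + leg + 1`, the legs sum to `b(λ)`
and the arms to `b(λ')`, so `∑ h = n + b(λ) + b(λ')`, and the factor `q^{-b(λ) - b(λ')}`
turns `q^{-b(λ')}` into `q^{b(λ)}`.
-/

namespace YoungDiagram

open Finset

theorem prod_cells_transpose {M : Type*} [CommMonoid M] (μ : YoungDiagram) (f : ℕ × ℕ → M) :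
    ∏ c ∈ μ.transpose.cells, f c = ∏ c ∈ μ.cells, f c.swap :=
  prod_map μ.cells (Equiv.prodComm ℕ ℕ).toEmbedding f

theorem sum_cells_transpose {M : Type*} [AddCommMonoid M] (μ : YoungDiagram) (f : ℕ × ℕ → M) :
    ∑ c ∈ μ.transpose.cells, f c = ∑ c ∈ μ.cells, f c.swap :=
  sum_map μ.cells (Equiv.prodComm ℕ ℕ).toEmbedding f

theorem card_transpose (μ : YoungDiagram) : μ.transpose.card = μ.card :=
  card_map _

def cellsTransposeEquiv (μ : YoungDiagram) : μ.cells ≃ μ.transpose.cells :=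
  (Equiv.prodComm ℕ ℕ).subtypeEquiv fun c => by simp [mem_cells, mem_transpose]

end YoungDiagram

open YoungDiagram Finset

theorem hookLen_transpose (μ : YoungDiagram) (c : ℕ × ℕ) :
    hookLen μ.transpose c.swap = hookLen μ c := by
  simp only [hookLen, Prod.fst_swap, Prod.snd_swap, rowLen_transpose, colLen_transpose]
  omega

theorem dimSYT_transpose (μ : YoungDiagram) : dimSYT μ.transpose = dimSYT μ := by
  let E := μ.cellsTransposeEquiv
  refine (Nat.card_congr <| Equiv.subtypeEquiv
    (E.equivCongr (finCongr μ.card_transpose.symm)) fun T => ?_).symm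
  refine Equiv.forall₂_congr E E fun {c d} => ?_
  simpa [E, cellsTransposeEquiv] using imp.swap

/-- Reflecting each column upside down exchanges the leg of a cell with its row index. -/
theorem sum_cells_colLen_sub (μ : YoungDiagram) :
    ∑ c ∈ μ.cells, (μ.colLen c.2 - c.1 - 1) = bstat μ := by
  let reflect (c : ℕ × ℕ) : ℕ × ℕ := (μ.colLen c.2 - 1 - c.1, c.2)
  refine sum_nbij' reflect reflect ?_ ?_ ?_ ?_ ?_ <;>
  · rintro ⟨i, j⟩ h
    simp only [reflect, mem_cells, mem_iff_lt_colLen, Prod.mk.injEq, and_true] at h ⊢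
    omega

theorem sum_cells_rowLen_sub (μ : YoungDiagram) :
    ∑ c ∈ μ.cells, (μ.rowLen c.1 - c.2 - 1) = bstat μ.transpose := by
  simpa [sum_cells_transpose, colLen_transpose] using sum_cells_colLen_sub μ.transpose

theorem sum_hookLen (μ : YoungDiagram) :
    ∑ c ∈ μ.cells, hookLen μ c = μ.card + bstat μ + bstat μ.transpose := by
  have arm_leg : ∀ c ∈ μ.cells,
      hookLen μ c = (μ.colLen c.2 - c.1 - 1) + (μ.rowLen c.1 - c.2 - 1) + 1 := by
    rintro ⟨i, j⟩ h
    have hi := mem_iff_lt_colLen.1 ((mem_cells _).1 h)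
    have hj := mem_iff_lt_rowLen.1 ((mem_cells _).1 h)
    simp only [hookLen]
    omega
  rw [sum_congr rfl arm_leg, sum_add_distrib, sum_add_distrib, sum_cells_colLen_sub,
    sum_cells_rowLen_sub, sum_const, smul_eq_mul, mul_one]
  ring

theorem qint_inv (q : ℝ) (hq : q ≠ 0) (m : ℕ) : qint q⁻¹ m = q / q ^ m * qint q m := by
  have num : q⁻¹ ^ m - 1 = (q ^ m - 1) * -q⁻¹ ^ m := by
    rw [inv_pow]; field_simp; ring
  have den : q⁻¹ - 1 = (q - 1) * -q⁻¹ := by field_simp; ring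
  rw [qint, qint, num, den, mul_div_mul_comm, neg_div_neg_eq, inv_pow, div_inv_eq_mul]
  ring

theorem prod_qint_inv_hookLen_transpose (q : ℝ) (hq : q ≠ 0) (μ : YoungDiagram) :
    ∏ c ∈ μ.transpose.cells, qint q⁻¹ (hookLen μ.transpose c) =
      (q ^ bstat μ * q ^ bstat μ.transpose)⁻¹ * ∏ c ∈ μ.cells, qint q (hookLen μ c) := by
  simp_rw [prod_cells_transpose, hookLen_transpose, qint_inv q hq, prod_mul_distrib,
    prod_div_distrib, prod_const, prod_pow_eq_pow_sum, sum_hookLen, pow_add]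
  field_simp

theorem stmt_5_general (q : ℝ) (hq0 : 0 < q) (μ : YoungDiagram) :
    qPlancherel q⁻¹ μ.transpose = qPlancherel q μ := by
  rw [qPlancherel, qPlancherel, dimSYT_transpose, prod_qint_inv_hookLen_transpose q hq0.ne',
    inv_pow]
  field_simp

/-- The `q`-Plancherel measure satisfies `M_{n,q⁻¹}(λ') = M_{n,q}(λ)`, where `λ'` is the
conjugate (transposed) partition. -/
theorem stmt_5 (q : ℝ) (hq0 : 0 < q) (hq1 : q ≠ 1) (n : ℕ)
    (μ : YoungDiagram) (hμ : μ.card = n) :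
    qPlancherel q⁻¹ μ.transpose = qPlancherel q μ :=
  stmt_5_general q hq0 μ
end

section
/- For every positive integer n, the sum over all permutations σ in the symmetric group S_n of q^{maj(σ)} equals the q-factorial {n!}_q = ∏_{m=1}^n (q^m - 1)/(q - 1), where maj(σ) is the major index, i.e. the sum of all i ∈ {1,...,n-1} with σ(i) > σ(i+1). -/
/-!
Insert the new largest letter `n` into one of the `n + 1` gaps of a word `τ ∈ S_n`.  Descents
to the left of the gap are kept, those to its right move one step right, and a descent is created
right after the new letter (destroying the one at the gap, if any).  Numbering the gaps so that
the right end comes first, then the descent gaps from right to left, then the left end and the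
remaining ascent gaps from left to right, the `k`-th gap (counting from `0`) raises `maj` by
exactly `k`.  Hence `∑_{σ ∈ S_{n+1}} q^maj σ = (1 + q + ⋯ + q^n) ∑_{τ ∈ S_n} q^maj τ`, and
induction gives the `q`-factorial.
-/

open Finset Equiv

namespace MajorIndex

variable {n : ℕ}

def IsDescent (τ : Perm (Fin n)) (j : ℕ) : Prop :=
  ∃ h : j + 1 < n, τ ⟨j + 1, h⟩ < τ ⟨j, Nat.lt_of_succ_lt h⟩

instance (τ : Perm (Fin n)) : DecidablePred (IsDescent τ) := fun _ => by
  unfold IsDescent; infer_instance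

theorem IsDescent.succ_lt {τ : Perm (Fin n)} {j : ℕ} (h : IsDescent τ j) : j + 1 < n := h.1

def maj (τ : Perm (Fin n)) : ℕ := ∑ j ∈ range n, if IsDescent τ j then j + 1 else 0

def descentsFrom (τ : Perm (Fin n)) (k : ℕ) : ℕ := #{j ∈ Ico k n | IsDescent τ j}

section descentsFrom

variable (τ : Perm (Fin n)) {j k l : ℕ}

theorem descentsFrom_eq_add (hkl : k ≤ l) (hl : l ≤ n) :
    descentsFrom τ k = #{j ∈ Ico k l | IsDescent τ j} + descentsFrom τ l := by
  rw [descentsFrom, descentsFrom, ← Ico_union_Ico_eq_Ico hkl hl, filter_union,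
    card_union_of_disjoint ((Ico_disjoint_Ico_consecutive k l n).mono
      (filter_subset _ _) (filter_subset _ _))]

theorem descentsFrom_of_le (h : n ≤ k) : descentsFrom τ k = 0 := by
  simp [descentsFrom, Ico_eq_empty_of_le h]

theorem descentsFrom_add_le (hk : k < n) : descentsFrom τ k + k + 1 ≤ n := by
  have hsub : {j ∈ Ico k n | IsDescent τ j} ⊆ Ico k (n - 1) := fun j hj => by
    simp only [mem_filter, mem_Ico] at hj ⊢
    have := hj.2.succ_lt
    omega
  have := card_le_card hsub
  rw [Nat.card_Ico] at this
  rw [descentsFrom]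
  omega

theorem descentsFrom_succ_lt (hkj : k ≤ j) (hj : IsDescent τ j) :
    descentsFrom τ (j + 1) < descentsFrom τ k := by
  rw [descentsFrom_eq_add τ (by omega : k ≤ j + 1) hj.succ_lt.le]
  have : j ∈ {j ∈ Ico k (j + 1) | IsDescent τ j} := by simp [hj, hkj]
  have := card_pos.mpr ⟨j, this⟩
  omega

theorem descentsFrom_le_add (hkl : k ≤ l) (hl : l ≤ n) :
    descentsFrom τ k ≤ descentsFrom τ l + (l - k) := by
  have : #{j ∈ Ico k l | IsDescent τ j} ≤ l - k :=
    (card_filter_le _ _).trans_eq (Nat.card_Ico k l)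
  rw [descentsFrom_eq_add τ hkl hl]
  omega

theorem descentsFrom_le_add_of_not_isDescent (hkj : k ≤ j) (hj : j < n)
    (hd : ¬ IsDescent τ j) :
    descentsFrom τ k ≤ descentsFrom τ (j + 1) + (j - k) := by
  have hsub : {i ∈ Ico k (j + 1) | IsDescent τ i} ⊆ Ico k j := fun i hi => by
    simp only [mem_filter, mem_Ico] at hi ⊢
    refine ⟨hi.1.1, lt_of_le_of_ne (Nat.lt_succ_iff.mp hi.1.2) ?_⟩
    rintro rfl
    exact hd hi.2
  have := card_le_card hsub
  rw [Nat.card_Ico] at this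
  rw [descentsFrom_eq_add τ (by omega : k ≤ j + 1) hj]
  omega

end descentsFrom

/-- `p` stands for the gap just before position `p`, so `p = n` is the right end. -/
def majIncrement (τ : Perm (Fin n)) (p : ℕ) : ℕ :=
  if 0 < p ∧ IsDescent τ (p - 1) then descentsFrom τ p + 1
  else if p < n then descentsFrom τ p + p + 1 else 0

section majIncrement

variable (τ : Perm (Fin n))

theorem majIncrement_le {p : ℕ} (hp : p ≤ n) : majIncrement τ p ≤ n := by
  unfold majIncrement
  split_ifs with hd hpn
  · have := hd.2.succ_lt
    have := descentsFrom_add_le τ (by omega : p < n)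
    omega
  · have := descentsFrom_add_le τ hpn
    omega
  · exact Nat.zero_le n

theorem majIncrement_self : majIncrement τ n = 0 := by
  have : ¬ IsDescent τ (n - 1) := fun h => by have := h.succ_lt; omega
  simp [majIncrement, this]

theorem majIncrement_pos {p : ℕ} (hp : p < n) : 0 < majIncrement τ p := by
  unfold majIncrement
  split_ifs <;> omega

theorem majIncrement_ne_of_lt {p p' : ℕ} (hpp' : p < p') (hp' : p' ≤ n) :
    majIncrement τ p ≠ majIncrement τ p' := by
  obtain hp'n | rfl := hp'.lt_or_eq
  swap
  · exact majIncrement_self τ ▸ (majIncrement_pos τ hpp').ne'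
  unfold majIncrement
  by_cases hd : 0 < p ∧ IsDescent τ (p - 1) <;> by_cases hd' : 0 < p' ∧ IsDescent τ (p' - 1)
  · have := descentsFrom_succ_lt τ (by omega : p ≤ p' - 1) hd'.2
    rw [Nat.sub_add_cancel hd'.1] at this
    simp only [if_pos hd, if_pos hd']
    omega
  · have := descentsFrom_le_add τ hpp'.le hp'n.le
    simp only [if_pos hd, if_neg hd', if_pos hp'n]
    omega
  · have := descentsFrom_succ_lt τ (by omega : p ≤ p' - 1) hd'.2
    rw [Nat.sub_add_cancel hd'.1] at this
    simp only [if_neg hd, if_pos hd', if_pos (hpp'.trans hp'n)]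
    omega
  · have hnd : ¬ IsDescent τ (p' - 1) := fun h => hd' ⟨by omega, h⟩
    have := descentsFrom_le_add_of_not_isDescent τ (by omega : p ≤ p' - 1) (by omega) hnd
    rw [Nat.sub_add_cancel (by omega : 1 ≤ p')] at this
    simp only [if_neg hd, if_neg hd', if_pos hp'n, if_pos (hpp'.trans hp'n)]
    omega

theorem sum_pow_majIncrement {R : Type*} [CommSemiring R] (q : R) :
    ∑ p : Fin (n + 1), q ^ majIncrement τ p = ∑ k ∈ range (n + 1), q ^ k := by
  have hinj : Set.InjOn (majIncrement τ) (range (n + 1)) := fun p hp p' hp' h => by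
    simp only [coe_range, Set.mem_Iio] at hp hp'
    by_contra hne
    obtain hlt | hlt := Nat.lt_or_gt_of_ne hne
    · exact majIncrement_ne_of_lt τ hlt (by omega) h
    · exact majIncrement_ne_of_lt τ hlt (by omega) h.symm
  have himage : (range (n + 1)).image (majIncrement τ) = range (n + 1) := by
    refine eq_of_subset_of_card_le (fun k hk => ?_) (card_image_of_injOn hinj).ge
    obtain ⟨p, hp, rfl⟩ := mem_image.mp hk
    exact mem_range.mpr <| Nat.lt_succ_of_le <|
      majIncrement_le τ (by simpa [Nat.lt_succ_iff] using hp)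
  rw [Fin.sum_univ_eq_sum_range (fun p => q ^ majIncrement τ p),
    ← sum_image (f := (q ^ ·)) hinj, himage]

end majIncrement

/-- The one-line notation of `insertMax p τ` is that of `τ` with the letter `n` inserted at
position `p`. -/
def insertMax (p : Fin (n + 1)) (τ : Perm (Fin n)) : Perm (Fin (n + 1)) :=
  (finSuccEquiv' p).trans (τ.optionCongr.trans finSuccEquivLast.symm)

section insertMax

variable (p : Fin (n + 1)) (τ : Perm (Fin n))

@[simp]
theorem insertMax_apply_self : insertMax p τ p = Fin.last n := by
  simp [insertMax]

@[simp]
theorem insertMax_apply_succAbove (j : Fin n) :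
    insertMax p τ (p.succAbove j) = (τ j).castSucc := by
  simp [insertMax]

theorem insertMax_apply_of_lt {i : ℕ} (hi : i < n) (hip : i < p) :
    insertMax p τ ⟨i, by omega⟩ = (τ ⟨i, hi⟩).castSucc := by
  rw [← insertMax_apply_succAbove,
    Fin.succAbove_of_castSucc_lt _ _ (by simpa [Fin.lt_def] using hip)]
  rfl

theorem insertMax_apply_succ_of_le {i : ℕ} (hi : i < n) (hpi : p ≤ i) :
    insertMax p τ ⟨i + 1, by omega⟩ = (τ ⟨i, hi⟩).castSucc := by
  rw [← insertMax_apply_succAbove,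
    Fin.succAbove_of_le_castSucc _ _ (by simpa [Fin.le_def] using hpi)]
  rfl

theorem isDescent_insertMax_of_lt {j : ℕ} (hjp : j + 1 < p) :
    IsDescent (insertMax p τ) j ↔ IsDescent τ j := by
  have hj : j + 1 < n := by omega
  simp only [IsDescent, exists_prop_of_true hj, exists_prop_of_true (by omega : j + 1 < n + 1),
    insertMax_apply_of_lt p τ hj hjp, insertMax_apply_of_lt p τ (by omega : j < n) (by omega),
    Fin.castSucc_lt_castSucc_iff]

theorem not_isDescent_insertMax_pred {j : ℕ} (hjp : j + 1 = p) :
    ¬ IsDescent (insertMax p τ) j := by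
  rintro ⟨_, h⟩
  simp only [show (⟨j + 1, _⟩ : Fin (n + 1)) = p from Fin.ext hjp, insertMax_apply_self] at h
  exact absurd h (not_lt.mpr (Fin.le_last _))

theorem isDescent_insertMax_self : IsDescent (insertMax p τ) p ↔ (p : ℕ) < n := by
  refine ⟨fun h => by have := h.succ_lt; omega, fun hp => ⟨by omega, ?_⟩⟩
  rw [insertMax_apply_succ_of_le p τ hp le_rfl, Fin.eta, insertMax_apply_self]
  exact Fin.castSucc_lt_last _

theorem isDescent_insertMax_succ {j : ℕ} (hpj : p ≤ j) :
    IsDescent (insertMax p τ) (j + 1) ↔ IsDescent τ j := by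
  by_cases hj : j + 1 < n
  · simp only [IsDescent, exists_prop_of_true hj,
      exists_prop_of_true (by omega : j + 1 + 1 < n + 1),
      insertMax_apply_succ_of_le p τ hj (by omega),
      insertMax_apply_succ_of_le p τ (by omega : j < n) hpj, Fin.castSucc_lt_castSucc_iff]
  · exact iff_of_false (fun h => by have := h.succ_lt; omega) (fun h => hj h.succ_lt)

theorem maj_insertMax : maj (insertMax p τ) = maj τ + majIncrement τ p := by
  set σ := insertMax p τ
  have hpn : (p : ℕ) ≤ n := Fin.is_le p
  have lower : ∑ j ∈ range p, (if IsDescent σ j then j + 1 else 0)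
      + (if 0 < (p : ℕ) ∧ IsDescent τ (p - 1) then (p : ℕ) else 0)
      = ∑ j ∈ range p, (if IsDescent τ j then j + 1 else 0) := by
    rcases Nat.eq_zero_or_pos (p : ℕ) with h0 | hp0
    · simp [h0]
    · obtain ⟨k, hk⟩ := Nat.exists_eq_add_one.mpr hp0
      have hlt : ∀ j ∈ range k, (if IsDescent σ j then j + 1 else 0)
          = if IsDescent τ j then j + 1 else 0 := fun j hj => by
        simp only [σ, isDescent_insertMax_of_lt p τ (by simp at hj; omega : j + 1 < p)]
      rw [hk, sum_range_succ, sum_range_succ, sum_congr rfl hlt,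
        if_neg (not_isDescent_insertMax_pred p τ hk.symm), Nat.add_sub_cancel]
      simp only [Nat.succ_pos, true_and]
      split_ifs <;> omega
  have middle :
      (if IsDescent σ p then (p : ℕ) + 1 else 0) = if (p : ℕ) < n then (p : ℕ) + 1 else 0 := by
    simp only [σ, isDescent_insertMax_self]
  have upper : ∑ j ∈ Ico ((p : ℕ) + 1) (n + 1), (if IsDescent σ j then j + 1 else 0)
      = ∑ j ∈ Ico (p : ℕ) n, (if IsDescent τ j then j + 1 else 0) + descentsFrom τ p := by
    rw [← sum_Ico_add' _ _ _ 1, descentsFrom, card_filter, ← sum_add_distrib]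
    refine sum_congr rfl fun j hj => ?_
    simp only [σ, isDescent_insertMax_succ p τ (mem_Ico.mp hj).1]
    split_ifs <;> rfl
  rw [maj, maj, ← sum_range_add_sum_Ico _ (by omega : (p : ℕ) ≤ n + 1),
    sum_eq_sum_Ico_succ_bot (by omega : (p : ℕ) < n + 1), ← sum_range_add_sum_Ico _ hpn,
    middle, upper, majIncrement]
  split_ifs at lower ⊢ with hpn' hd hd
  · omega
  · omega
  · exact absurd hd.2.succ_lt (by omega)
  · rw [descentsFrom_of_le τ (not_lt.mp hpn')]
    omega

end insertMax

theorem insertMax_injective :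
    Function.Injective (fun x : Fin (n + 1) × Perm (Fin n) => insertMax x.1 x.2) := by
  rintro ⟨p, τ⟩ ⟨p', τ'⟩ h
  dsimp only at h
  obtain rfl : p = p' :=
    (insertMax p τ).injective (by rw [insertMax_apply_self, h, insertMax_apply_self])
  obtain rfl : τ = τ' := Equiv.ext fun j => Fin.castSucc_injective n <| by
    rw [← insertMax_apply_succAbove p τ j, ← insertMax_apply_succAbove p τ' j, h]
  rfl

theorem insertMax_bijective :
    Function.Bijective (fun x : Fin (n + 1) × Perm (Fin n) => insertMax x.1 x.2) := by
  refine (Fintype.bijective_iff_injective_and_card _).mpr ⟨insertMax_injective, ?_⟩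
  simp [Fintype.card_perm, Nat.factorial_succ]

variable {R : Type*} [CommSemiring R]

theorem sum_pow_maj_succ (q : R) :
    ∑ σ : Perm (Fin (n + 1)), q ^ maj σ
      = (∑ k ∈ range (n + 1), q ^ k) * ∑ τ : Perm (Fin n), q ^ maj τ := by
  rw [← Fintype.sum_bijective _ insertMax_bijective (fun x => q ^ maj (insertMax x.1 x.2))
    (fun σ => q ^ maj σ) fun _ => rfl, Fintype.sum_prod_type, sum_comm, mul_sum]
  refine Finset.sum_congr rfl fun τ _ => ?_
  simp only [maj_insertMax, pow_add, ← mul_sum, sum_pow_majIncrement, mul_comm]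

theorem sum_pow_maj (q : R) (n : ℕ) :
    ∑ σ : Perm (Fin n), q ^ maj σ = ∏ m ∈ Icc 1 n, ∑ k ∈ range m, q ^ k := by
  induction n with
  | zero => simp [maj]
  | succ n ih => rw [sum_pow_maj_succ, ih, prod_Icc_succ_top (by omega), mul_comm]

end MajorIndex

theorem stmt_6_general (q : ℝ) (hq : q ≠ 1) (n : ℕ) :
    ∑ σ : Equiv.Perm (Fin n),
        q ^ (∑ i : Fin n, if h : (i : ℕ) + 1 < n then
          (if σ ⟨(i : ℕ) + 1, h⟩ < σ i then (i : ℕ) + 1 else 0) else 0)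
      = ∏ m ∈ Finset.Icc 1 n, (q ^ m - 1) / (q - 1) := by
  have hmaj (σ : Perm (Fin n)) : (∑ i : Fin n, if h : (i : ℕ) + 1 < n then
      (if σ ⟨(i : ℕ) + 1, h⟩ < σ i then (i : ℕ) + 1 else 0) else 0) = MajorIndex.maj σ := by
    rw [MajorIndex.maj,
      ← Fin.sum_univ_eq_sum_range (fun j => if MajorIndex.IsDescent σ j then j + 1 else 0)]
    refine sum_congr rfl fun i _ => ?_
    by_cases h : (i : ℕ) + 1 < n <;> simp [MajorIndex.IsDescent, h]
  simp only [hmaj, MajorIndex.sum_pow_maj]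
  exact prod_congr rfl fun m _ => geom_sum_eq hq m

/-- The generating function of the major index over the symmetric group `S_n` is the
`q`-factorial: `∑_{σ ∈ S_n} q^(maj σ) = ∏_{m=1}^n (q^m - 1)/(q - 1)`.  Here the major
index of `σ` is the sum of the positions `i ∈ {1, …, n-1}` with `σ(i) > σ(i+1)`;
permutations act on `Fin n` (0-indexed), so position `i+1` (1-indexed) corresponds to
the descent `σ ⟨i+1⟩ < σ i` and contributes `i + 1`. -/
theorem stmt_6 (q : ℝ) (hq : q ≠ 1) (n : ℕ) (hn : 0 < n) :
    ∑ σ : Equiv.Perm (Fin n),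
        q ^ (∑ i : Fin n, if h : (i : ℕ) + 1 < n then
          (if σ ⟨(i : ℕ) + 1, h⟩ < σ i then (i : ℕ) + 1 else 0) else 0)
      = ∏ m ∈ Finset.Icc 1 n, (q ^ m - 1) / (q - 1) :=
  stmt_6_general q hq n
end

section
/- For any partitions μ and ν, the product Σ_μ · Σ_ν in the center of ℂS_n equals ∑_M Σ_{ρ(M)}, where the sum runs over partial matchings M between the index set of the entries of the cycles of μ and that of ν, and ρ(M) is a partition depending only on M with |ρ(M)| = |μ| + |ν| - |M|. In particular, Σ_μ · Σ_ν = Σ_{μ∪ν} + ∑_{|ρ| < |μ|+|ν|} c^ρ_{μ,ν} Σ_ρ for some nonnegative integers c^ρ_{μ,ν}. -/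
open scoped BigOperators

/-- The normalized conjugacy class element `Σ_ρ` in the group algebra `ℂ S_n`, for a
composition `ρ`: the sum over families of pairwise disjoint arrangements
`A_i : Fin ρ_i ↪ Fin n` of the products of cycles `C(A_1) ⋯ C(A_r)`. -/
noncomputable def SigmaL (n : ℕ) (ρ : List ℕ) :
    MonoidAlgebra ℂ (Equiv.Perm (Fin n)) :=
  ∑ A : (∀ i : Fin ρ.length, Fin (ρ.get i) ↪ Fin n),
    if ∀ i j : Fin ρ.length, i ≠ j → ∀ x y, A i x ≠ A j y then
      MonoidAlgebra.of ℂ (Equiv.Perm (Fin n))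
        ((List.ofFn fun i => (List.ofFn (A i)).formPerm).prod)
    else 0

/-- The index set of the entries of the cycles of a composition `μ`. -/
abbrev CycIdx (μ : List ℕ) : Type := Σ i : Fin μ.length, Fin (μ.get i)

/-- A partial matching between the index sets: a set of pairs which is the graph of a
partially defined injection in both directions. -/
def IsMatching {μ ν : List ℕ} (M : Finset (CycIdx μ × CycIdx ν)) : Prop :=
  ∀ p ∈ M, ∀ r ∈ M, (Prod.fst p = Prod.fst r ↔ Prod.snd p = Prod.snd r)


instance {μ ν : List ℕ} : DecidablePred (IsMatching (μ := μ) (ν := ν)) := fun _ => by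
  unfold IsMatching; infer_instance

/-!
Write `Σ_ρ` as `∑_c c·σ_ρ·c⁻¹`, where `σ_ρ` is the standard permutation of `CycIdx ρ` rotating
each block `Fin ρ_i`, and `c` runs over the injections `CycIdx ρ ↪ [n]`, `c·π·c⁻¹` being
`π` transported along `c` and extended by the identity. This expression makes sense for a
permutation `π` of any finite set, and it only depends on `π` up to relabelling.

A pair of injections `a : CycIdx μ ↪ [n]`, `b : CycIdx ν ↪ [n]` is the same datum as the partial
matching `M = {(p, q) | a p = b q}` together with one injection of the set obtained from
`CycIdx μ ⊔ CycIdx ν` by gluing `q` to `p` for `(p, q) ∈ M`; this set has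
`|μ| + |ν| - |M|` elements. Under this correspondence the product of the two transported
permutations is the transport of the product `σ_μ σ_ν` on the glued set, so
`Σ_μ Σ_ν = ∑_M Σ_{ρ(M)}` where `ρ(M)` is the cycle type (fixed points included) of that
product. The empty matching glues nothing and gives `σ_μ ⊔ σ_ν`, of cycle type `μ ∪ ν`.
-/

open Equiv Function

namespace Equiv

variable {α β γ α' β' : Type*}

theorem permCongr_eq_iff (e : α ≃ β) (p : Perm α) (q : Perm β) :
    e.permCongr p = q ↔ ∀ x, e (p x) = q (e x) := by
  refine ⟨fun h x => by simp [← h], fun h => Equiv.ext fun y => ?_⟩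
  obtain ⟨x, rfl⟩ := e.surjective y
  simp [h]

theorem symm_permCongr_eq_iff (e : α ≃ β) (p : Perm α) (q : Perm β) :
    e.symm.permCongr q = p ↔ e.permCongr p = q := by
  rw [← permCongr_symm, Equiv.symm_apply_eq, eq_comm]

theorem trans_permCongr (e₁ : α ≃ β) (e₂ : β ≃ γ) (p : Perm α) :
    (e₁.trans e₂).permCongr p = e₂.permCongr (e₁.permCongr p) := rfl

theorem refl_permCongr (p : Perm α) : (Equiv.refl α).permCongr p = p := rfl

theorem sumCongr_permCongr (e₁ : α ≃ α') (e₂ : β ≃ β') (p : Perm α) (q : Perm β) :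
    (sumCongr e₁ e₂).permCongr (Perm.sumCongr p q)
      = Perm.sumCongr (e₁.permCongr p) (e₂.permCongr q) := by
  refine Equiv.ext ?_
  rintro (x | y) <;> simp

theorem sumAssoc_permCongr (p : Perm α) (q : Perm β) (r : Perm γ) :
    (sumAssoc α β γ).permCongr (Perm.sumCongr (Perm.sumCongr p q) r)
      = Perm.sumCongr p (Perm.sumCongr q r) := by
  refine Equiv.ext ?_
  rintro (x | y | z) <;> rfl

def sumSigmaFinSucc {m : ℕ} (β : Fin (m + 1) → Type*) :
    β 0 ⊕ (Σ i : Fin m, β i.succ) ≃ Σ i, β i where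
  toFun := Sum.elim (Sigma.mk 0) fun p => ⟨p.1.succ, p.2⟩
  invFun p := Fin.cases (motive := fun i => β i → β 0 ⊕ Σ j : Fin m, β j.succ)
    Sum.inl (fun j y => Sum.inr ⟨j, y⟩) p.1 p.2
  left_inv := by rintro (x | ⟨j, y⟩) <;> rfl
  right_inv := by
    rintro ⟨i, x⟩
    induction i using Fin.cases <;> rfl

theorem sumSigmaFinSucc_permCongr {m : ℕ} {β : Fin (m + 1) → Type*} (π : ∀ i, Perm (β i)) :
    (sumSigmaFinSucc β).permCongr (Perm.sumCongr (π 0) (Perm.sigmaCongrRight fun i => π i.succ))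
      = Perm.sigmaCongrRight π := by
  rw [permCongr_eq_iff]
  rintro (x | ⟨j, y⟩) <;> rfl

end Equiv

theorem Fin.val_finRotate {k : ℕ} (i : Fin k) : (finRotate k i : ℕ) = (i + 1) % k := by
  have := i.neZero
  rw [finRotate_apply, Fin.val_add, Fin.val_one', Nat.add_mod_mod]

namespace Equiv.Perm

variable {α β γ : Type*}

theorem viaEmbedding_viaEmbedding (π : Perm α) (f : α ↪ β) (g : β ↪ γ) :
    (π.viaEmbedding f).viaEmbedding g = π.viaEmbedding (f.trans g) := by
  ext x
  by_cases hfg : x ∈ Set.range (f.trans g)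
  · obtain ⟨y, rfl⟩ := hfg
    rw [viaEmbedding_apply]
    exact (viaEmbedding_apply _ g (f y)).trans (congrArg g (viaEmbedding_apply π f y))
  rw [viaEmbedding_apply_of_notMem _ _ _ hfg]
  by_cases hg : x ∈ Set.range g
  · obtain ⟨z, rfl⟩ := hg
    have hf : z ∉ Set.range f := fun ⟨w, hw⟩ => hfg ⟨w, by simp [hw]⟩
    rw [viaEmbedding_apply, viaEmbedding_apply_of_notMem _ _ _ hf]
  · rw [viaEmbedding_apply_of_notMem _ _ _ hg]

theorem viaEmbedding_toEmbedding (π : Perm α) (e : α ≃ β) :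
    π.viaEmbedding e.toEmbedding = e.permCongr π := by
  rw [eq_comm, permCongr_eq_iff]
  exact fun x => (viaEmbedding_apply π e.toEmbedding x).symm

theorem viaEmbedding_permCongr (π : Perm α) (e : α ≃ β) (c : β ↪ γ) :
    (e.permCongr π).viaEmbedding c = π.viaEmbedding (e.toEmbedding.trans c) := by
  rw [← viaEmbedding_toEmbedding, viaEmbedding_viaEmbedding]

theorem viaEmbedding_mul (π σ : Perm α) (c : α ↪ β) :
    (π * σ).viaEmbedding c = π.viaEmbedding c * σ.viaEmbedding c :=
  map_mul (viaEmbeddingHom c) π σ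

theorem viaEmbedding_of_isEmpty [IsEmpty α] (π : Perm α) (c : α ↪ β) : π.viaEmbedding c = 1 := by
  rw [Subsingleton.elim π 1]
  exact map_one (viaEmbeddingHom c)

theorem sumCongr_eq_viaEmbedding_mul (π : Perm α) (σ : Perm β) :
    sumCongr π σ = π.viaEmbedding Embedding.inl * σ.viaEmbedding Embedding.inr := by
  refine Equiv.ext ?_
  rintro (x | y)
  · have hx : Sum.inl x ∉ Set.range (Embedding.inr : β ↪ α ⊕ β) := by simp
    rw [mul_apply, viaEmbedding_apply_of_notMem _ _ _ hx]
    exact (viaEmbedding_apply π Embedding.inl x).symm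
  · have hy : Sum.inr (σ y) ∉ Set.range (Embedding.inl : α ↪ α ⊕ β) := by simp
    rw [mul_apply]
    exact ((congrArg _ (viaEmbedding_apply σ Embedding.inr y)).trans
      (viaEmbedding_apply_of_notMem π Embedding.inl _ hy)).symm

theorem prod_ofFn_viaEmbedding_sigmaMk :
    ∀ {m : ℕ} {β : Fin m → Type*} (π : ∀ i, Perm (β i)) (c : (Σ i, β i) ↪ γ),
      (List.ofFn fun i => (π i).viaEmbedding ((Embedding.sigmaMk i).trans c)).prod
        = (sigmaCongrRight π).viaEmbedding c
  | 0, β, π, c => by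
    have : IsEmpty (Σ i : Fin 0, β i) := ⟨fun p => p.1.elim0⟩
    rw [List.ofFn_zero, List.prod_nil, viaEmbedding_of_isEmpty]
  | m + 1, β, π, c => by
    rw [← sumSigmaFinSucc_permCongr, viaEmbedding_permCongr, sumCongr_eq_viaEmbedding_mul,
      viaEmbedding_mul, viaEmbedding_viaEmbedding, viaEmbedding_viaEmbedding,
      ← prod_ofFn_viaEmbedding_sigmaMk, List.ofFn_succ, List.prod_cons]
    rfl

theorem subtypeCongr_subtypePerm {p : α → Prop} [DecidablePred p] (π : Perm α)
    (h : ∀ x, p (π x) ↔ p x) :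
    (π.subtypePerm h).subtypeCongr (π.subtypePerm fun x => not_congr (h x)) = π := by
  ext x
  by_cases hx : p x <;> simp [hx]

theorem exists_sameCycle_equiv_fin [Finite α] (π : Perm α) (a : α) :
    ∃ (k : ℕ) (e : {x // π.SameCycle a x} ≃ Fin k),
      e.permCongr (π.subtypePerm fun _ => sameCycle_apply_right) = finRotate k := by
  set k := minimalPeriod π a
  have hk : 0 < k := minimalPeriod_pos_of_mem_periodicPts (π.injective.mem_periodicPts a)
  let f : Fin k → {x // π.SameCycle a x} := fun m => ⟨(π ^ (m : ℕ)) a, ⟨m, by simp⟩⟩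
  have hf : Bijective f := by
    refine ⟨fun m m' h => Fin.ext (iterate_injOn_Iio_minimalPeriod m.2 m'.2 ?_), fun ⟨x, hx⟩ => ?_⟩
    · simpa [f, coe_pow] using congrArg Subtype.val h
    · obtain ⟨i, rfl⟩ := hx.exists_nat_pow_eq
      refine ⟨⟨i % k, Nat.mod_lt _ hk⟩, Subtype.ext ?_⟩
      simp only [f, coe_pow]
      exact iterate_mod_minimalPeriod_eq
  refine ⟨k, (ofBijective f hf).symm, (symm_permCongr_eq_iff _ _ _).mpr ?_⟩
  rw [permCongr_eq_iff]
  intro m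
  apply Subtype.ext
  change (π ^ (finRotate k m : ℕ)) a = π ((π ^ (m : ℕ)) a)
  rw [Fin.val_finRotate, coe_pow, iterate_mod_minimalPeriod_eq, iterate_succ_apply', coe_pow]

end Equiv.Perm

theorem List.formPerm_ofFn {k : ℕ} {β : Type*} [DecidableEq β] (b : Fin k ↪ β) :
    (List.ofFn b).formPerm = (finRotate k).viaEmbedding b := by
  ext x
  by_cases hx : x ∈ Set.range b
  · obtain ⟨i, rfl⟩ := hx
    have hi : (i : ℕ) < (List.ofFn b).length := by simp
    have hb : b i = (List.ofFn b)[(i : ℕ)] := by simp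
    rw [Perm.viaEmbedding_apply, hb,
      List.formPerm_apply_getElem _ (List.nodup_ofFn.mpr b.injective)]
    simp only [List.getElem_ofFn, List.length_ofFn]
    exact congrArg b (Fin.ext (Fin.val_finRotate i).symm)
  · rw [List.formPerm_apply_of_notMem (by simpa using hx),
      Perm.viaEmbedding_apply_of_notMem _ _ _ hx]

namespace CycIdx

def rotate (ρ : List ℕ) : Perm (CycIdx ρ) :=
  Perm.sigmaCongrRight fun i => finRotate (ρ.get i)

def consEquiv (k : ℕ) (ρ : List ℕ) : Fin k ⊕ CycIdx ρ ≃ CycIdx (k :: ρ) :=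
  sumSigmaFinSucc fun i => Fin ((k :: ρ).get i)

theorem consEquiv_permCongr (k : ℕ) (ρ : List ℕ) :
    (consEquiv k ρ).permCongr (Perm.sumCongr (finRotate k) (rotate ρ)) = rotate (k :: ρ) :=
  sumSigmaFinSucc_permCongr fun i => finRotate ((k :: ρ).get i)

instance : IsEmpty (CycIdx []) := ⟨fun p => p.1.elim0⟩

def appendEquiv : (μ ν : List ℕ) → CycIdx μ ⊕ CycIdx ν ≃ CycIdx (μ ++ ν)
  | [], _ => emptySum _ _
  | k :: μ, ν => (sumCongr (consEquiv k μ).symm (Equiv.refl _)).trans <|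
      (sumAssoc _ _ _).trans <| (sumCongr (Equiv.refl _) (appendEquiv μ ν)).trans <|
        consEquiv k (μ ++ ν)

theorem appendEquiv_permCongr : ∀ μ ν : List ℕ,
    (appendEquiv μ ν).permCongr (Perm.sumCongr (rotate μ) (rotate ν)) = rotate (μ ++ ν)
  | [], ν => rfl
  | k :: μ, ν => by
    have hcons := (symm_permCongr_eq_iff _ _ _).mpr (consEquiv_permCongr k μ)
    simp only [appendEquiv, trans_permCongr, sumCongr_permCongr, hcons, sumAssoc_permCongr,
      refl_permCongr, appendEquiv_permCongr μ ν]
    exact consEquiv_permCongr k (μ ++ ν)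

theorem card_eq_sum (ρ : List ℕ) : Fintype.card (CycIdx ρ) = ρ.sum := by
  rw [Fintype.card_sigma]
  simp only [Fintype.card_fin]
  conv_rhs => rw [← List.ofFn_get ρ]
  rw [List.sum_ofFn]

theorem exists_equiv_permCongr_eq_rotate {α : Type*} [Finite α] (π : Perm α) :
    ∃ (ρ : List ℕ) (e : α ≃ CycIdx ρ), e.permCongr π = rotate ρ := by
  induction h : Nat.card α using Nat.strong_induction_on generalizing α with
  | _ N ih =>
  rcases isEmpty_or_nonempty α with hα | hα
  · exact ⟨[], equivOfIsEmpty _ _, Subsingleton.elim _ _⟩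
  classical
  obtain ⟨a⟩ := hα
  obtain ⟨k, ec, hec⟩ := π.exists_sameCycle_equiv_fin a
  have hlt : Nat.card {x // ¬ π.SameCycle a x} < N :=
    h ▸ Finite.card_subtype_lt (not_not.mpr (Perm.SameCycle.refl π a))
  have hinv : ∀ x, π.SameCycle a (π x) ↔ π.SameCycle a x := fun _ => Perm.sameCycle_apply_right
  obtain ⟨ρ, e, he⟩ := ih _ hlt (π.subtypePerm fun x => not_congr (hinv x)) rfl
  have hsplit := π.subtypeCongr_subtypePerm hinv
  refine ⟨k :: ρ, (sumCompl _).symm.trans ((sumCongr ec e).trans (consEquiv k ρ)), ?_⟩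
  rw [trans_permCongr, trans_permCongr, (symm_permCongr_eq_iff _ _ _).mpr hsplit,
    sumCongr_permCongr, hec, he, consEquiv_permCongr]

end CycIdx

noncomputable def sigmaOfPerm (R X : Type*) [Semiring R] [Fintype X] {α : Type*} [Fintype α]
    (π : Perm α) : MonoidAlgebra R (Perm X) :=
  ∑ c : α ↪ X, MonoidAlgebra.of R (Perm X) (π.viaEmbedding c)

theorem sigmaOfPerm_permCongr (R X : Type*) [Semiring R] [Fintype X] {α β : Type*} [Fintype α]
    [Fintype β] (e : α ≃ β) (π : Perm α) :
    sigmaOfPerm R X (e.permCongr π) = sigmaOfPerm R X π := by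
  refine Fintype.sum_equiv (embeddingCongr e.symm (Equiv.refl X)) _ _ fun c => ?_
  rw [Perm.viaEmbedding_permCongr]
  rfl

def disjointFamilyEquiv (n : ℕ) (ρ : List ℕ) :
    {A : ∀ i : Fin ρ.length, Fin (ρ.get i) ↪ Fin n //
      ∀ i j : Fin ρ.length, i ≠ j → ∀ x y, A i x ≠ A j y} ≃ (CycIdx ρ ↪ Fin n) where
  toFun A := ⟨fun p => A.1 p.1 p.2, by
    rintro ⟨i, x⟩ ⟨j, y⟩ h
    by_cases hij : i = j
    · subst hij
      exact congrArg (Sigma.mk i) ((A.1 i).injective h)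
    · exact absurd h (A.2 i j hij x y)⟩
  invFun c := ⟨fun i => (Embedding.sigmaMk i).trans c, fun i j hij x y h =>
    hij (congrArg Sigma.fst (c.injective h))⟩
  left_inv _ := rfl
  right_inv _ := rfl

theorem SigmaL_eq_sigmaOfPerm (n : ℕ) (ρ : List ℕ) :
    SigmaL n ρ = sigmaOfPerm ℂ (Fin n) (CycIdx.rotate ρ) := by
  rw [SigmaL, ← Finset.sum_filter, Finset.sum_subtype _ fun _ => Finset.mem_filter_univ _]
  refine Fintype.sum_equiv (disjointFamilyEquiv n ρ) _ _ fun A => ?_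
  rw [CycIdx.rotate, ← Perm.prod_ofFn_viaEmbedding_sigmaMk]
  congr
  funext i
  exact List.formPerm_ofFn (A.1 i)

abbrev Matching (μ ν : List ℕ) : Type := {M : Finset (CycIdx μ × CycIdx ν) // IsMatching M}

section Matching

variable {μ ν : List ℕ} (M : Finset (CycIdx μ × CycIdx ν))

abbrev Unmatched : Type := {q : CycIdx ν // ∀ p, (p, q) ∉ M}

/-- `CycIdx μ ⊔ CycIdx ν` with every matched entry of `ν` glued to its partner in `μ`. -/
abbrev Merged : Type := CycIdx μ ⊕ Unmatched M

noncomputable def toMerged (q : CycIdx ν) : Merged M :=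
  if h : ∃ p, (p, q) ∈ M then Sum.inl h.choose else Sum.inr ⟨q, not_exists.mp h⟩

variable {M}

theorem toMerged_of_mem (hM : IsMatching M) {p : CycIdx μ} {q : CycIdx ν} (h : (p, q) ∈ M) :
    toMerged M q = Sum.inl p := by
  have hq : ∃ p, (p, q) ∈ M := ⟨p, h⟩
  rw [toMerged, dif_pos hq]
  exact congrArg Sum.inl ((hM _ hq.choose_spec _ h).mpr rfl)

theorem toMerged_unmatched (q : Unmatched M) : toMerged M q = Sum.inr q :=
  dif_neg (not_exists.mpr q.2)

theorem mem_of_toMerged_eq_inl {p : CycIdx μ} {q : CycIdx ν} (h : toMerged M q = Sum.inl p) :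
    (p, q) ∈ M := by
  by_cases hq : ∃ p, (p, q) ∈ M
  · rw [toMerged, dif_pos hq, Sum.inl.injEq] at h
    exact h ▸ hq.choose_spec
  · rw [toMerged, dif_neg hq] at h
    exact absurd h Sum.inr_ne_inl

theorem toMerged_injective (hM : IsMatching M) : Injective (toMerged M) := by
  intro q q' h
  by_cases hq : ∃ p, (p, q) ∈ M
  · obtain ⟨p, hp⟩ := hq
    rw [toMerged_of_mem hM hp] at h
    exact (hM _ hp _ (mem_of_toMerged_eq_inl h.symm)).mp rfl
  by_cases hq' : ∃ p, (p, q') ∈ M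
  · obtain ⟨p, hp⟩ := hq'
    rw [toMerged_of_mem hM hp] at h
    exact absurd (mem_of_toMerged_eq_inl h) (not_exists.mp hq p)
  · rw [toMerged_unmatched ⟨q, not_exists.mp hq⟩,
      toMerged_unmatched ⟨q', not_exists.mp hq'⟩] at h
    exact congrArg Subtype.val (Sum.inr_injective h)

noncomputable def toMergedEmb (hM : IsMatching M) : CycIdx ν ↪ Merged M :=
  ⟨toMerged M, toMerged_injective hM⟩

noncomputable def mergedPerm (hM : IsMatching M) : Perm (Merged M) :=
  (CycIdx.rotate μ).viaEmbedding Embedding.inl * (CycIdx.rotate ν).viaEmbedding (toMergedEmb hM)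

theorem IsMatching.card_image_snd (hM : IsMatching M) : (M.image Prod.snd).card = M.card :=
  Finset.card_image_of_injOn fun x hx y hy h => Prod.ext ((hM x hx y hy).mpr h) h

theorem card_merged (hM : IsMatching M) :
    Fintype.card (Merged M) = μ.sum + ν.sum - M.card := by
  have hunm : ∀ q, (∀ p, (p, q) ∉ M) ↔ q ∉ M.image Prod.snd := by
    simp only [Finset.mem_image, not_exists, not_and, Prod.forall]
    exact fun q => ⟨fun h p q' hpq' hq' => h p (hq' ▸ hpq'), fun h p hpq => h p q hpq rfl⟩
  have hle : M.card ≤ ν.sum := by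
    simpa [hM.card_image_snd, CycIdx.card_eq_sum] using Finset.card_le_univ (M.image Prod.snd)
  rw [Fintype.card_sum, Fintype.card_congr (subtypeEquivRight hunm), Fintype.card_subtype_compl,
    Fintype.card_coe, hM.card_image_snd, CycIdx.card_eq_sum, CycIdx.card_eq_sum]
  omega

end Matching

section EmbeddingPairs

variable {μ ν : List ℕ} {X : Type*} [DecidableEq X]

def matchingOf (a : CycIdx μ ↪ X) (b : CycIdx ν ↪ X) : Finset (CycIdx μ × CycIdx ν) :=
  Finset.univ.filter fun pq => a pq.1 = b pq.2

theorem mem_matchingOf {a : CycIdx μ ↪ X} {b : CycIdx ν ↪ X} {p : CycIdx μ} {q : CycIdx ν} :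
    (p, q) ∈ matchingOf a b ↔ a p = b q := by
  simp [matchingOf]

theorem isMatching_matchingOf (a : CycIdx μ ↪ X) (b : CycIdx ν ↪ X) :
    IsMatching (matchingOf a b) := by
  rintro ⟨p, q⟩ hpq ⟨p', q'⟩ hpq'
  rw [mem_matchingOf] at hpq hpq'
  constructor
  · rintro (rfl : p = p')
    exact b.injective (hpq.symm.trans hpq')
  · rintro (rfl : q = q')
    exact a.injective (hpq.trans hpq'.symm)

def mergeEmb (a : CycIdx μ ↪ X) (b : CycIdx ν ↪ X) : Merged (matchingOf a b) ↪ X :=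
  ⟨Sum.elim a fun q => b q, by
    rintro (p | ⟨q, hq⟩) (p' | ⟨q', hq'⟩) h
    · exact congrArg Sum.inl (a.injective h)
    · exact absurd (mem_matchingOf.mpr h) (hq' p)
    · exact absurd (mem_matchingOf.mpr h.symm) (hq p')
    · exact congrArg Sum.inr (Subtype.ext (b.injective h))⟩

theorem mergeEmb_toMerged (a : CycIdx μ ↪ X) (b : CycIdx ν ↪ X) (q : CycIdx ν) :
    mergeEmb a b (toMerged _ q) = b q := by
  by_cases hq : ∃ p, (p, q) ∈ matchingOf a b
  · obtain ⟨p, hp⟩ := hq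
    rw [toMerged_of_mem (isMatching_matchingOf a b) hp]
    exact mem_matchingOf.mp hp
  · rw [toMerged_unmatched ⟨q, not_exists.mp hq⟩]
    rfl

theorem matchingOf_restrict {M : Finset (CycIdx μ × CycIdx ν)} (hM : IsMatching M)
    (c : Merged M ↪ X) : matchingOf (Embedding.inl.trans c) ((toMergedEmb hM).trans c) = M := by
  ext ⟨p, q⟩
  rw [mem_matchingOf]
  change c (Sum.inl p) = c (toMerged M q) ↔ _
  rw [c.injective.eq_iff]
  exact ⟨fun h => mem_of_toMerged_eq_inl h.symm, fun h => (toMerged_of_mem hM h).symm⟩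

variable (μ ν X)

noncomputable def restrictPair (x : Σ M : Matching μ ν, Merged M.1 ↪ X) :
    (CycIdx μ ↪ X) × (CycIdx ν ↪ X) :=
  (Embedding.inl.trans x.2, (toMergedEmb x.1.2).trans x.2)

theorem restrictPair_bijective : Bijective (restrictPair μ ν X) := by
  refine ⟨?_, fun ⟨a, b⟩ => ⟨⟨⟨_, isMatching_matchingOf a b⟩, mergeEmb a b⟩, ?_⟩⟩
  · rintro ⟨⟨M, hM⟩, c⟩ ⟨⟨M', hM'⟩, c'⟩ h
    obtain ⟨ha, hb⟩ := Prod.mk.inj h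
    obtain rfl : M = M' := by
      rw [← matchingOf_restrict hM c, ← matchingOf_restrict hM' c', ha, hb]
    obtain rfl : c = c' := by
      ext (p | q)
      · exact DFunLike.congr_fun ha p
      · have hq : c (toMerged M q) = c' (toMerged M q) := DFunLike.congr_fun hb q.1
        rwa [toMerged_unmatched] at hq
    rfl
  · refine Prod.ext (Embedding.ext fun p => rfl) (Embedding.ext fun q => ?_)
    exact mergeEmb_toMerged a b q

end EmbeddingPairs

section Product

variable {μ ν : List ℕ} (R X : Type*) [Semiring R] [Fintype X]

theorem sigmaOfPerm_rotate_mul_rotate :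
    sigmaOfPerm R X (CycIdx.rotate μ) * sigmaOfPerm R X (CycIdx.rotate ν)
      = ∑ M : Matching μ ν,
          sigmaOfPerm R X (mergedPerm M.2) := by
  classical
  let of := MonoidAlgebra.of R (Perm X)
  calc sigmaOfPerm R X (CycIdx.rotate μ) * sigmaOfPerm R X (CycIdx.rotate ν)
      = ∑ ab : (CycIdx μ ↪ X) × (CycIdx ν ↪ X),
          of ((CycIdx.rotate μ).viaEmbedding ab.1) * of ((CycIdx.rotate ν).viaEmbedding ab.2) := by
        rw [sigmaOfPerm, sigmaOfPerm, Fintype.sum_mul_sum]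
        exact (Fintype.sum_prod_type' _).symm
    _ = ∑ x : Σ M : Matching μ ν, Merged M.1 ↪ X,
          of ((mergedPerm x.1.2).viaEmbedding x.2) := by
        refine (Fintype.sum_bijective _ (restrictPair_bijective μ ν X) _ _ fun x => ?_).symm
        rw [mergedPerm, Perm.viaEmbedding_mul, map_mul, Perm.viaEmbedding_viaEmbedding,
          Perm.viaEmbedding_viaEmbedding]
        rfl
    _ = _ := Fintype.sum_sigma _

end Product

section MergedShape

variable {μ ν : List ℕ}

noncomputable def mergedShape (M : Matching μ ν) :
    List ℕ :=
  (CycIdx.exists_equiv_permCongr_eq_rotate (mergedPerm M.2)).choose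

theorem sigmaOfPerm_mergedPerm (R X : Type*) [Semiring R] [Fintype X]
    (M : Matching μ ν) :
    sigmaOfPerm R X (mergedPerm M.2) = sigmaOfPerm R X (CycIdx.rotate (mergedShape M)) := by
  obtain ⟨e, he⟩ := (CycIdx.exists_equiv_permCongr_eq_rotate (mergedPerm M.2)).choose_spec
  rw [mergedShape, ← he, sigmaOfPerm_permCongr]

theorem sum_mergedShape (M : Matching μ ν) :
    (mergedShape M).sum = μ.sum + ν.sum - M.1.card := by
  obtain ⟨e, -⟩ := (CycIdx.exists_equiv_permCongr_eq_rotate (mergedPerm M.2)).choose_spec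
  rw [mergedShape, ← CycIdx.card_eq_sum, ← Fintype.card_congr e, card_merged M.2]

theorem isMatching_empty : IsMatching (∅ : Finset (CycIdx μ × CycIdx ν)) :=
  fun _ h => absurd h (Finset.notMem_empty _)

def unmatchedEmptyEquiv : CycIdx ν ≃ Unmatched (∅ : Finset (CycIdx μ × CycIdx ν)) :=
  (subtypeUnivEquiv fun _ _ => Finset.notMem_empty _).symm

theorem mergedPerm_empty :
    mergedPerm (isMatching_empty (μ := μ) (ν := ν))
      = (sumCongr (Equiv.refl _) unmatchedEmptyEquiv).permCongr
          (Perm.sumCongr (CycIdx.rotate μ) (CycIdx.rotate ν)) := by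
  have h : toMergedEmb (isMatching_empty (μ := μ) (ν := ν))
      = unmatchedEmptyEquiv.toEmbedding.trans Embedding.inr :=
    Embedding.ext fun q => toMerged_unmatched (unmatchedEmptyEquiv q)
  rw [mergedPerm, h, ← Perm.viaEmbedding_viaEmbedding, Perm.viaEmbedding_toEmbedding,
    ← Perm.sumCongr_eq_viaEmbedding_mul, sumCongr_permCongr, refl_permCongr]

theorem sigmaOfPerm_mergedPerm_empty (R X : Type*) [Semiring R] [Fintype X] :
    sigmaOfPerm R X (mergedPerm (isMatching_empty (μ := μ) (ν := ν)))
      = sigmaOfPerm R X (CycIdx.rotate (μ ++ ν)) := by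
  rw [mergedPerm_empty, sigmaOfPerm_permCongr, ← CycIdx.appendEquiv_permCongr,
    sigmaOfPerm_permCongr]

end MergedShape

theorem sum_mergedShape_lt {μ ν : List ℕ} {M : Matching μ ν}
    (hM : M.1.Nonempty) : (mergedShape M).sum < μ.sum + ν.sum := by
  have hcard := hM.card_pos
  obtain ⟨⟨p, _⟩, _⟩ := hM
  have hμ : 0 < μ.sum := CycIdx.card_eq_sum μ ▸ Fintype.card_pos_iff.mpr ⟨p⟩
  rw [sum_mergedShape]
  omega

/-- In the center of `ℂ S_n`: `Σ_μ · Σ_ν = ∑_M Σ_{ρ(M)}`, the sum running over all partial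
matchings `M` between the entry indices of the cycles of `μ` and those of `ν`, where
`ρ(M)` is a composition depending only on `M` with `|ρ(M)| = |μ| + |ν| - |M|`.
In particular `Σ_μ · Σ_ν = Σ_{μ∪ν} + ∑_{|ρ| < |μ|+|ν|} c^ρ_{μν} Σ_ρ` with nonnegative
integer coefficients `c^ρ_{μν}`. -/
theorem stmt_8 (n : ℕ) (μ ν : List ℕ) :
    (∃ ρof : {M : Finset (CycIdx μ × CycIdx ν) // IsMatching M} → List ℕ,
      (∀ M, (ρof M).sum = μ.sum + ν.sum - (M : Finset (CycIdx μ × CycIdx ν)).card) ∧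
      SigmaL n μ * SigmaL n ν
        = ∑ M : {M : Finset (CycIdx μ × CycIdx ν) // IsMatching M}, SigmaL n (ρof M))
    ∧ (∃ (S : Finset (List ℕ)) (c : List ℕ → ℕ),
      (∀ ρ ∈ S, ρ.sum < μ.sum + ν.sum) ∧
      SigmaL n μ * SigmaL n ν
        = SigmaL n (μ ++ ν) + ∑ ρ ∈ S, (c ρ : ℂ) • SigmaL n ρ) := by
  have hprod : SigmaL n μ * SigmaL n ν
      = ∑ M : Matching μ ν, SigmaL n (mergedShape M) := by
    simp only [SigmaL_eq_sigmaOfPerm, sigmaOfPerm_rotate_mul_rotate, sigmaOfPerm_mergedPerm]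
  refine ⟨⟨mergedShape, sum_mergedShape, hprod⟩, ?_⟩
  let M₀ : Matching μ ν := ⟨∅, isMatching_empty⟩
  have hM₀ : SigmaL n (mergedShape M₀) = SigmaL n (μ ++ ν) := by
    rw [SigmaL_eq_sigmaOfPerm, SigmaL_eq_sigmaOfPerm, ← sigmaOfPerm_mergedPerm,
      sigmaOfPerm_mergedPerm_empty]
  let others := Finset.univ.erase M₀
  refine ⟨others.image mergedShape, fun ρ => (others.filter (mergedShape · = ρ)).card, ?_, ?_⟩
  · simp only [Finset.mem_image]
    rintro _ ⟨M, hM, rfl⟩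
    refine sum_mergedShape_lt (Finset.nonempty_iff_ne_empty.mpr fun h => ?_)
    exact Finset.ne_of_mem_erase hM (Subtype.ext h)
  · rw [hprod, ← Finset.add_sum_erase _ _ (Finset.mem_univ M₀), hM₀, Finset.sum_comp]
    simp only [Nat.cast_smul_eq_nsmul, others]
end

section
/- For integers 1 ≤ k ≤ n, a partition ρ of k, and a partition ν of n, the Hall scalar product satisfies ⟨h_{ρ·1^{n-k}}, p_ν⟩ = (z_ν / z_{ν_k}) · ⟨h_ρ, p_{ν_k}⟩ if ν = ν_k ∪ 1^{n-k} for some partition ν_k of k (equivalently, if the number m_1(ν) of parts of ν equal to 1 satisfies m_1(ν) ≥ n-k), and ⟨h_{ρ·1^{n-k}}, p_ν⟩ = 0 otherwise. -/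
open scoped BigOperators
open MvPolynomial

/-- Symmetric functions, represented as polynomials in the algebraically independent
power sums: the variable `X i` stands for the power sum `p_i`. -/
abbrev SymFn : Type := MvPolynomial ℕ ℝ

/-- The power sum `p_μ = ∏_i p_{μ_i}` attached to a multiset of parts. -/
noncomputable def pPoly (m : Multiset ℕ) : SymFn := (m.map X).prod

/-- `z_μ = ∏_i i^{m_i} m_i!`. -/
noncomputable def zMul (m : Multiset ℕ) : ℝ :=
  (m.map fun i => (i : ℝ)).prod * ∏ i ∈ m.toFinset, (Nat.factorial (m.count i) : ℝ)

/-- `z` of an exponent vector (`d i` parts equal to `i`). -/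
noncomputable def zExp (d : ℕ →₀ ℕ) : ℝ :=
  ∏ i ∈ d.support, (i : ℝ) ^ (d i) * (Nat.factorial (d i) : ℝ)

/-- The Hall scalar product: power sums are orthogonal with `⟨p_μ, p_μ⟩ = z_μ`. -/
noncomputable def hall (f g : SymFn) : ℝ :=
  ∑ d ∈ f.support, f.coeff d * g.coeff d * zExp d

/-- The complete homogeneous symmetric function `h_k = ∑_{μ ⊢ k} p_μ / z_μ`. -/
noncomputable def hPoly (k : ℕ) : SymFn :=
  ∑ μ : Nat.Partition k, (zMul μ.parts)⁻¹ • pPoly μ.parts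

/-- `h_μ = ∏_i h_{μ_i}`. -/
noncomputable def hProd (m : Multiset ℕ) : SymFn := (m.map hPoly).prod

lemma zMul_eq (m : Multiset ℕ) :
    zMul m = (Multiset.map (fun i : ℕ => (i:ℝ)) m).prod
      * ∏ i ∈ m.toFinset, (Nat.factorial (m.count i) : ℝ) := by
  rw [zMul]
  congr 1
  simp [Bind.bind, Multiset.pure_def, Multiset.bind_singleton]

lemma pPoly_eq (m : Multiset ℕ) : pPoly m = monomial m.toFinsupp 1 := by
  induction m using Multiset.induction_on with
  | empty => simp [pPoly, monomial_zero']
  | cons a s ih =>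
    have : (a ::ₘ s) = ({a} : Multiset ℕ) + s := by simp
    rw [this]
    simp only [pPoly, Multiset.map_add, Multiset.prod_add, Multiset.toFinsupp_add]
    rw [show ((({a} : Multiset ℕ)).map X).prod = X a by simp]
    rw [show (s.map X).prod = pPoly s from rfl, ih, Multiset.toFinsupp_singleton]
    rw [X, monomial_mul, one_mul]

lemma hall_pPoly (f : SymFn) (m : Multiset ℕ) :
    hall f (pPoly m) = f.coeff m.toFinsupp * zExp m.toFinsupp := by
  rw [hall]
  have : ∀ d ∈ f.support, f.coeff d * (pPoly m).coeff d * zExp d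
      = if m.toFinsupp = d then f.coeff d * zExp d else 0 := by
    intro d _
    rw [pPoly_eq, coeff_monomial]
    split_ifs <;> ring
  rw [Finset.sum_congr rfl this, Finset.sum_ite_eq]
  split_ifs with h
  · rfl
  · rw [notMem_support_iff.mp h, zero_mul]

lemma zExp_toFinsupp (m : Multiset ℕ) : zExp m.toFinsupp = zMul m := by
  rw [zExp, zMul_eq, Finset.prod_multiset_map_count m (fun i => (i:ℝ)),
    ← Finset.prod_mul_distrib]
  rfl

lemma parts_one (μ : Nat.Partition 1) : μ.parts = {1} := by
  obtain ⟨p, hpos, hsum⟩ := μ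
  show p = {1}
  induction p using Multiset.induction_on with
  | empty => simp at hsum
  | cons a t ih =>
    rw [Multiset.sum_cons] at hsum
    have ha : 0 < a := hpos (Multiset.mem_cons_self a t)
    have ht : t = 0 := by
      refine Multiset.eq_zero_of_forall_notMem fun x hx => ?_
      have h1 := hpos (Multiset.mem_cons_of_mem hx)
      have h2 := Multiset.single_le_sum (fun y _ => Nat.zero_le y) x hx
      omega
    subst ht
    have : a = 1 := by simpa using hsum
    subst this
    rfl

lemma hPoly_one : hPoly 1 = X 1 := by
  have hsub : Subsingleton (Nat.Partition 1) :=
    ⟨fun a b => Nat.Partition.ext (by rw [parts_one a, parts_one b])⟩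
  have μ0 : Nat.Partition 1 := ⟨{1}, by simp, by simp⟩
  rw [hPoly, Fintype.sum_subsingleton _ μ0]
  have : μ0.parts = {1} := parts_one μ0
  rw [this]
  have hz : zMul {1} = 1 := by rw [zMul_eq]; simp
  have hp : pPoly {1} = X 1 := by simp [pPoly]
  rw [hz, hp, inv_one, one_smul]

lemma hProd_add (m t : Multiset ℕ) : hProd (m + t) = hProd m * hProd t := by
  simp [hProd]

lemma hProd_replicate_one (r : ℕ) : hProd (Multiset.replicate r 1) = X 1 ^ r := by
  simp [hProd, Multiset.map_replicate, hPoly_one, Multiset.prod_replicate]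

lemma toFinsupp_replicate_one (r : ℕ) :
    Multiset.toFinsupp (Multiset.replicate r (1:ℕ)) = Finsupp.single 1 r := by
  ext a
  simp [Multiset.toFinsupp_apply, Multiset.count_replicate, Finsupp.single_apply, eq_comm]

lemma zMul_ne_zero (m : Multiset ℕ) (hp : ∀ i ∈ m, 0 < i) : zMul m ≠ 0 := by
  rw [zMul_eq]
  apply mul_ne_zero
  · refine Multiset.prod_ne_zero fun h0 => ?_
    rw [Multiset.mem_map] at h0
    obtain ⟨i, hi, hi0⟩ := h0
    exact (Nat.cast_ne_zero.mpr (hp i hi).ne') hi0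
  · rw [Finset.prod_ne_zero_iff]
    intro i _
    exact_mod_cast (Nat.factorial_pos _).ne'

/-- For `1 ≤ k ≤ n`, `ρ ⊢ k` and `ν ⊢ n`, the Hall scalar product
`⟨h_{ρ·1^{n-k}}, p_ν⟩` vanishes unless `ν` has at least `n-k` parts equal to `1`, and if
`ν = ν_k ∪ 1^{n-k}` with `ν_k ⊢ k`, then it equals `(z_ν / z_{ν_k}) ⟨h_ρ, p_{ν_k}⟩`. -/
theorem stmt_9 (k n : ℕ) (hk : 1 ≤ k) (hkn : k ≤ n)
    (ρ : Nat.Partition k) (ν : Nat.Partition n) :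
    (Multiset.count 1 ν.parts < n - k →
      hall (hProd (ρ.parts + Multiset.replicate (n - k) 1)) (pPoly ν.parts) = 0)
    ∧ (∀ νk : Nat.Partition k, ν.parts = νk.parts + Multiset.replicate (n - k) 1 →
      hall (hProd (ρ.parts + Multiset.replicate (n - k) 1)) (pPoly ν.parts)
        = (zMul ν.parts / zMul νk.parts) * hall (hProd ρ.parts) (pPoly νk.parts)) := by
  set r := n - k with hr
  have hmain : ∀ m : Multiset ℕ,
      hall (hProd (ρ.parts + Multiset.replicate r 1)) (pPoly m)
        = (if Finsupp.single 1 r ≤ m.toFinsupp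
            then (hProd ρ.parts).coeff (m.toFinsupp - Finsupp.single 1 r) else 0)
          * zExp m.toFinsupp := by
    intro m
    rw [hall_pPoly, hProd_add, hProd_replicate_one, X_pow_eq_monomial, coeff_mul_monomial']
    simp only [mul_one]
  constructor
  · intro hlt
    rw [hmain, if_neg, zero_mul]
    rw [Finsupp.single_le_iff, Multiset.toFinsupp_apply]
    omega
  · intro νk hν
    have hD2 : ν.parts.toFinsupp = νk.parts.toFinsupp + Finsupp.single 1 r := by
      rw [hν, Multiset.toFinsupp_add, toFinsupp_replicate_one]
    rw [hmain, zExp_toFinsupp, hD2, if_pos le_add_self, add_tsub_cancel_right,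
      hall_pPoly, zExp_toFinsupp]
    have hne : zMul νk.parts ≠ 0 := zMul_ne_zero _ (fun i hi => νk.parts_pos hi)
    field_simp
end

section
/- The change of basis between q-characters and ordinary characters is triangular and explicitly given by: (q-1)^{ℓ(ρ)} Σ_{ρ,q} = ∑_{ν⊢k} ((q^ν - 1)/z_ν) ⟨p_ν, h_ρ⟩ Σ_ν and conversely (q^ρ - 1) Σ_ρ = ∑_{ν⊢k} (q-1)^{ℓ(ν)} ⟨m_ν, p_ρ⟩ Σ_{ν,q}, where these two linear relations are inverse to each other; equivalently, the two transition matrices A_{ρν} = (q^ν-1)⟨p_ν,h_ρ⟩/(z_ν (q-1)^{ℓ(ρ)}) and B_{ρν} = (q-1)^{ℓ(ν)}⟨m_ν,p_ρ⟩/(q^ρ-1) over partitions of k are mutually inverse. -/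
open scoped BigOperators

open Matrix

section DiagonalForm

variable {K ι V : Type*} [Field K] [AddCommGroup V] [Module K V]
  (b : Module.Basis ι K V) (Bil : V →ₗ[K] V →ₗ[K] K) {z : ι → K}

theorem LinearMap.flip_eq_self_of_apply_basis_eq_ite [DecidableEq ι]
    (hb : ∀ i j, Bil (b i) (b j) = if i = j then z i else 0) : Bil.flip = Bil :=
  LinearMap.ext_basis b b fun i j => by
    by_cases hij : i = j
    · subst hij; rfl
    · simp [hb, hij, Ne.symm hij]

theorem LinearMap.apply_basis_left_eq_repr_mul [DecidableEq ι]
    (hb : ∀ i j, Bil (b i) (b j) = if i = j then z i else 0) (i : ι) (x : V) :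
    Bil (b i) x = b.repr x i * z i := by
  have hcoord : Bil (b i) = z i • b.coord i :=
    b.ext fun j => by
      by_cases hij : i = j
      · subst hij; simp [hb]
      · simp [hb, hij, Finsupp.single_eq_of_ne hij]
  rw [hcoord, LinearMap.smul_apply, Module.Basis.coord_apply, smul_eq_mul, mul_comm]

theorem Module.Basis.sum_repr_mul_apply [Fintype ι] (f : V →ₗ[K] K) (x : V) :
    ∑ i, b.repr x i * f (b i) = f x := by
  conv_rhs => rw [← b.sum_repr x]
  simp only [map_sum, map_smul, smul_eq_mul]

end DiagonalForm

theorem Matrix.diagonal_inv_mul_mul_diagonal_mul_eq_one {K ι : Type*} [Field K] [Fintype ι]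
    [DecidableEq ι] {C D : Matrix ι ι K} (hCD : C * D = 1) {u w : ι → K} (hu : ∀ i, u i ≠ 0)
    (hw : ∀ i, w i ≠ 0) :
    (diagonal u⁻¹ * C * diagonal w) * (diagonal w⁻¹ * D * diagonal u) = 1 := by
  have hdiag : ∀ {v : ι → K}, (∀ i, v i ≠ 0) → diagonal v⁻¹ * diagonal v = 1 := fun hv => by
    rw [diagonal_mul_diagonal, ← diagonal_one]
    exact congrArg diagonal (funext fun i => inv_mul_cancel₀ (hv i))
  calc (diagonal u⁻¹ * C * diagonal w) * (diagonal w⁻¹ * D * diagonal u)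
      = diagonal u⁻¹ * (C * (diagonal w * diagonal w⁻¹) * D) * diagonal u := by
        simp only [Matrix.mul_assoc]
    _ = diagonal u⁻¹ * diagonal u := by
        rw [mul_eq_one_comm.mp (hdiag hw), Matrix.mul_one, hCD, Matrix.mul_one]
    _ = 1 := hdiag hu

theorem zMul_ne_zero_s13 {s : Multiset ℕ} (hs : 0 ∉ s) : zMul s ≠ 0 := by
  refine mul_ne_zero (Multiset.prod_ne_zero ?_) (Finset.prod_ne_zero_iff.mpr fun i _ => ?_)
  · simpa using hs
  · exact_mod_cast (Nat.factorial_pos _).ne'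

theorem prod_map_pow_sub_one_ne_zero {q : ℝ} (hq : ∀ j : ℕ, 1 ≤ j → q ^ j ≠ 1) {k : ℕ}
    (ν : Nat.Partition k) : (ν.parts.map fun i => q ^ i - 1).prod ≠ 0 := by
  refine Multiset.prod_ne_zero fun h0 => ?_
  obtain ⟨i, hi, hi0⟩ := Multiset.mem_map.mp h0
  exact hq i (ν.parts_pos hi) (sub_eq_zero.mp hi0)

theorem stmt_13_general (k : ℕ) (q : ℝ) (hq : ∀ j : ℕ, 1 ≤ j → q ^ j ≠ 1)
    (V : Type) [AddCommGroup V] [Module ℝ V]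
    (Bil : V →ₗ[ℝ] V →ₗ[ℝ] ℝ)
    (p h m : Nat.Partition k → V)
    (bp : Module.Basis (Nat.Partition k) ℝ V) (hbp : ∀ ρ, bp ρ = p ρ)
    (hpp : ∀ μ ν, Bil (p μ) (p ν) = if μ = ν then zMul μ.parts else 0)
    (hhm : ∀ μ ν, Bil (h μ) (m ν) = if μ = ν then 1 else 0)
    (A B : Matrix (Nat.Partition k) (Nat.Partition k) ℝ)
    (hA : ∀ ρ ν, A ρ ν = ((ν.parts.map fun i => q ^ i - 1).prod) * Bil (p ν) (h ρ) /
      (zMul ν.parts * (q - 1) ^ (Multiset.card ρ.parts)))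
    (hB : ∀ ρ ν, B ρ ν = (q - 1) ^ (Multiset.card ν.parts) * Bil (m ν) (p ρ) /
      ((ρ.parts.map fun i => q ^ i - 1).prod)) :
    A * B = 1 ∧ B * A = 1 := by
  obtain rfl : ⇑bp = p := funext hbp
  let C : Matrix (Nat.Partition k) (Nat.Partition k) ℝ := of fun ρ ν => bp.repr (h ρ) ν
  let D : Matrix (Nat.Partition k) (Nat.Partition k) ℝ := of fun ν σ => Bil (m σ) (bp ν)
  let L : Nat.Partition k → ℝ := fun ρ => (q - 1) ^ Multiset.card ρ.parts
  let Q : Nat.Partition k → ℝ := fun ν => (ν.parts.map fun i => q ^ i - 1).prod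
  have hCD : C * D = 1 := by
    ext ρ σ
    rw [mul_apply, one_apply]
    simp only [C, D, of_apply]
    rw [bp.sum_repr_mul_apply, ← LinearMap.flip_apply,
      Bil.flip_eq_self_of_apply_basis_eq_ite bp hpp, hhm]
  have hL : ∀ ρ, L ρ ≠ 0 := fun ρ => pow_ne_zero _ (sub_ne_zero.mpr (by simpa using hq 1 le_rfl))
  have hA' : A = diagonal L⁻¹ * C * diagonal Q := by
    ext ρ ν
    rw [mul_diagonal, diagonal_mul, hA, Bil.apply_basis_left_eq_repr_mul bp hpp]
    simp only [C, L, Q, of_apply, Pi.inv_apply]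
    have := zMul_ne_zero_s13 (s := ν.parts) fun h0 => (ν.parts_pos h0).false
    field_simp
  have hB' : B = diagonal Q⁻¹ * D * diagonal L := by
    ext ν σ
    rw [mul_diagonal, diagonal_mul, hB]
    simp only [D, L, Q, of_apply, Pi.inv_apply]
    ring
  have hAB : A * B = 1 := by
    rw [hA', hB']
    exact diagonal_inv_mul_mul_diagonal_mul_eq_one hCD hL (prod_map_pow_sub_one_ne_zero hq)
  exact ⟨hAB, mul_eq_one_comm.mp hAB⟩

/-- The change of basis between the `q`-characters `Σ_{ρ,q}` and the ordinary characters
`Σ_ν` is given by the two mutually inverse matrices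
`A ρ ν = (q^ν - 1) ⟨p_ν, h_ρ⟩ / (z_ν (q-1)^{ℓ(ρ)})` and
`B ρ ν = (q-1)^{ℓ(ν)} ⟨m_ν, p_ρ⟩ / (q^ρ - 1)`.
The Hall scalar product on the degree-`k` symmetric functions is axiomatized: `V` is the
space of degree-`k` symmetric functions, `Bil` a symmetric bilinear form for which the
power sums `p` form an orthogonal basis with `⟨p_ν, p_ν⟩ = z_ν`, and the complete and
monomial families `h`, `m` are dual: `⟨h_μ, m_ν⟩ = δ_{μν}`.  `q` is a real which is not a
root of unity (`q^m ≠ 1` for all `m ≥ 1`). -/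
theorem stmt_13 (k : ℕ) (hk : 1 ≤ k) (q : ℝ) (hq : ∀ j : ℕ, 1 ≤ j → q ^ j ≠ 1)
    (V : Type) [AddCommGroup V] [Module ℝ V]
    (Bil : V →ₗ[ℝ] V →ₗ[ℝ] ℝ) (hsymm : ∀ x y, Bil x y = Bil y x)
    (p h m : Nat.Partition k → V)
    (bp : Module.Basis (Nat.Partition k) ℝ V) (hbp : ∀ ρ, bp ρ = p ρ)
    (hpp : ∀ μ ν, Bil (p μ) (p ν) = if μ = ν then zMul μ.parts else 0)
    (hhm : ∀ μ ν, Bil (h μ) (m ν) = if μ = ν then 1 else 0)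
    (A B : Matrix (Nat.Partition k) (Nat.Partition k) ℝ)
    (hA : ∀ ρ ν, A ρ ν = ((ν.parts.map fun i => q ^ i - 1).prod) * Bil (p ν) (h ρ) /
      (zMul ν.parts * (q - 1) ^ (Multiset.card ρ.parts)))
    (hB : ∀ ρ ν, B ρ ν = (q - 1) ^ (Multiset.card ν.parts) * Bil (m ν) (p ρ) /
      ((ρ.parts.map fun i => q ^ i - 1).prod)) :
    A * B = 1 ∧ B * A = 1 :=
  stmt_13_general k q hq V Bil p h m bp hbp hpp hhm A B hA hB
end

section
/- For a sequence of random Young diagrams λ^{(n)} of size n distributed according to the q-Plancherel measure with fixed 0 < q < 1: if for every k ≥ 1 the normalized power sums p_k(λ^{(n)})/n^k converge in probability to (1-q)^k/(1-q^k), then for every i ≥ 1 the normalized row lengths λ_i^{(n)}/n converge in probability to (1-q)q^{i-1}. -/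
open scoped BigOperators
open Filter

/-- The diagonal length of a Young diagram. -/
def diagLen (μ : YoungDiagram) : ℕ :=
  ((Finset.range (μ.card + 1)).filter fun i => (i, i) ∈ μ).card

/-- The power sum `p_k(λ) = ∑_{i=1}^d (a_i^*)^k - (-b_i^*)^k` of the modified Frobenius
coordinates `a_i^* = λ_i - i + 1/2`, `b_i^* = λ'_i - i + 1/2` (0-indexed below). -/
noncomputable def pObs (k : ℕ) (μ : YoungDiagram) : ℝ :=
  ∑ i ∈ Finset.range (diagLen μ),
    (((μ.rowLen i : ℝ) - i - 1/2) ^ k - (-((μ.colLen i : ℝ) - i - 1/2)) ^ k)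

/-! With `x_j = a^*_{j+1}/n` and `y_j = b^*_{j+1}/n`, the normalized power sum `p_k/n^k` equals
`∑ x_j^k - (-y_j)^k`: it is at most `∑ x_j^k` for even `k` and at least `∑ x_j^k` for odd `k`.
The `x_j` decrease and sum to at most `1`, so the part of `∑ x_j^k` from `j = i` on lies between
`x_i^k` and `x_i^(k-1)`. If `x_j → (1-q)q^j` for `j < i`, moment convergence leaves
`((1-q)q^i)^k/(1-q^k)` for that tail, and a large even (resp. odd) `k` pins `x_i` to `(1-q)q^i`
from below (resp. above); `λ_i/n` differs from `x_i` by `O(1/n)`. This proves the statement for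
deterministic sequences of diagrams. Arguing by contradiction with a sequence of diagrams whose
first `N` moments are `1/(N+1)`-close, it becomes uniform: moments of order `≤ K` within `δ`
force `λ_i/n` within `ε`. A union bound over `k ≤ K` turns this into convergence in
probability. -/

open Topology

theorem sum_Ico_pow_succ_le {x : ℕ → ℝ} (hx0 : ∀ j, 0 ≤ x j) (hx : Antitone x) {i m : ℕ}
    (hsum : ∑ j ∈ Finset.Ico i m, x j ≤ 1) (k : ℕ) :
    ∑ j ∈ Finset.Ico i m, x j ^ (k + 1) ≤ x i ^ k :=
  calc ∑ j ∈ Finset.Ico i m, x j ^ (k + 1)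
      ≤ ∑ j ∈ Finset.Ico i m, x i ^ k * x j := Finset.sum_le_sum fun j hj => by
        rw [pow_succ]
        exact mul_le_mul_of_nonneg_right
          (pow_le_pow_left₀ (hx0 j) (hx (Finset.mem_Ico.1 hj).1) k) (hx0 j)
    _ = x i ^ k * ∑ j ∈ Finset.Ico i m, x j := (Finset.mul_sum _ _ _).symm
    _ ≤ x i ^ k := mul_le_of_le_one_right (pow_nonneg (hx0 i) k) hsum

theorem div_sub_sum_geom_pow {q : ℝ} {k : ℕ} (hqk : q ^ k ≠ 1) (i : ℕ) :
    (1 - q) ^ k / (1 - q ^ k) - ∑ j ∈ Finset.range i, ((1 - q) * q ^ j) ^ k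
      = ((1 - q) * q ^ i) ^ k / (1 - q ^ k) := by
  have hpow : ∀ j, ((1 - q) * q ^ j) ^ k = (1 - q) ^ k * (q ^ k) ^ j := fun j => by
    rw [mul_pow, ← pow_mul, ← pow_mul, mul_comm j]
  have h1 : 1 - q ^ k ≠ 0 := sub_ne_zero.2 hqk.symm
  have h2 : q ^ k - 1 ≠ 0 := sub_ne_zero.2 hqk
  simp only [hpow, ← Finset.mul_sum, geom_sum_eq hqk]
  field_simp
  ring

theorem exists_odd_pow_lt_pow_succ {r c : ℝ} (hr : 0 ≤ r) (hrc : r < c) :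
    ∃ k, Odd k ∧ r ^ k < c ^ (k + 1) := by
  have hc : 0 < c := hr.trans_lt hrc
  obtain ⟨N, hN⟩ := ((tendsto_pow_atTop_nhds_zero_of_lt_one (div_nonneg hr hc.le)
    ((div_lt_one hc).2 hrc)).eventually_lt_const hc).exists_forall_of_atTop
  refine ⟨2 * N + 1, odd_two_mul_add_one N, ?_⟩
  have h := hN (2 * N + 1) (by omega)
  rwa [div_pow, div_lt_iff₀ (by positivity), ← pow_succ'] at h

theorem exists_odd_pow_div_lt {c s q : ℝ} (hc : 0 ≤ c) (hcs : c < s) (hq0 : 0 ≤ q)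
    (hq1 : q < 1) :
    ∃ k, Odd k ∧ c ^ k / (1 - q ^ k) < s ^ k := by
  have hs : 0 < s := hc.trans_lt hcs
  have hlim : Tendsto (fun n : ℕ => (c / s) ^ n + q ^ n) atTop (𝓝 0) := by
    simpa using (tendsto_pow_atTop_nhds_zero_of_lt_one (div_nonneg hc hs.le)
      ((div_lt_one hs).2 hcs)).add (tendsto_pow_atTop_nhds_zero_of_lt_one hq0 hq1)
  obtain ⟨N, hN⟩ := (hlim.eventually_lt_const one_pos).exists_forall_of_atTop
  refine ⟨2 * N + 1, odd_two_mul_add_one N, ?_⟩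
  have h := hN (2 * N + 1) (by omega)
  have hqk : q ^ (2 * N + 1) < 1 := pow_lt_one₀ hq0 hq1 (by omega)
  rw [div_pow, ← lt_sub_iff_add_lt, div_lt_iff₀ (by positivity)] at h
  rw [div_lt_iff₀ (by linarith)]
  linarith

theorem tsum_subtype_le_sum_tsum_subtype {α ι : Type*} {f : α → ℝ} (hf : ∀ a, 0 ≤ f a)
    {p : α → Prop} (F : Finset ι) {r : ι → α → Prop}
    (hr : ∀ k ∈ F, {a | r k a}.Finite) (hpr : ∀ a, p a → ∃ k ∈ F, r k a) :
    ∑' a : {a // p a}, f a ≤ ∑ k ∈ F, ∑' a : {a // r k a}, f a := by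
  have hind : ∀ k ∈ F, Summable ({a | r k a}.indicator f) := fun k hk =>
    summable_subtype_iff_indicator.1 ((hr k hk).summable f)
  have hle : ∀ a, {a | p a}.indicator f a ≤ ∑ k ∈ F, {a | r k a}.indicator f a := by
    intro a
    by_cases ha : p a
    · obtain ⟨k, hk, hak⟩ := hpr a ha
      rw [Set.indicator_of_mem (s := {a | p a}) ha,
        ← Set.indicator_of_mem (s := {a | r k a}) hak f]
      exact Finset.single_le_sum (f := fun k => {a | r k a}.indicator f a)
        (fun k _ => Set.indicator_nonneg (fun a _ => hf a) a) hk
    · rw [Set.indicator_of_notMem (s := {a | p a}) ha]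
      exact Finset.sum_nonneg fun k _ => Set.indicator_nonneg (fun a _ => hf a) a
  have hsum : Summable fun a => ∑ k ∈ F, {a | r k a}.indicator f a := summable_sum hind
  calc ∑' a : {a // p a}, f a = ∑' a, {a | p a}.indicator f a := tsum_subtype {a | p a} f
    _ ≤ ∑' a, ∑ k ∈ F, {a | r k a}.indicator f a :=
      (hsum.of_nonneg_of_le (Set.indicator_nonneg fun a _ => hf a) hle).tsum_le_tsum hle hsum
    _ = ∑ k ∈ F, ∑' a, {a | r k a}.indicator f a := Summable.tsum_finsetSum hind
    _ = ∑ k ∈ F, ∑' a : {a // r k a}, f a :=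
      Finset.sum_congr rfl fun k _ => (tsum_subtype {a | r k a} f).symm

namespace YoungDiagram

variable (μ : YoungDiagram)

theorem rowLen_le_card (i : ℕ) : μ.rowLen i ≤ μ.card := by
  rw [rowLen_eq_card]
  exact Finset.card_filter_le _ _

theorem colLen_le_card (j : ℕ) : μ.colLen j ≤ μ.card := by
  rw [colLen_eq_card]
  exact Finset.card_filter_le _ _

theorem sum_range_rowLen_le_card (m : ℕ) : ∑ i ∈ Finset.range m, μ.rowLen i ≤ μ.card := by
  classical
  have hfib : (μ.cells.filter fun c => c.1 < m).card = ∑ i ∈ Finset.range m, μ.rowLen i := by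
    rw [Finset.card_eq_sum_card_fiberwise (f := Prod.fst) (t := Finset.range m)
      fun c hc => Finset.mem_range.2 (Finset.mem_filter.1 hc).2]
    refine Finset.sum_congr rfl fun i hi => ?_
    rw [rowLen_eq_card, row, Finset.filter_filter]
    congr 1
    exact Finset.filter_congr fun c _ => by
      constructor
      · exact fun h => h.2
      · rintro rfl; exact ⟨Finset.mem_range.1 hi, rfl⟩
  exact hfib ▸ Finset.card_filter_le _ _

theorem finite_setOf_card_eq (n : ℕ) : {μ : YoungDiagram | μ.card = n}.Finite := by
  refine ((Finset.range n ×ˢ Finset.range n).powerset.finite_toSet.preimage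
    (fun μ _ ν _ h => YoungDiagram.ext h)).subset fun μ (hμ : μ.card = n) => ?_
  rw [Set.mem_preimage, Finset.mem_coe, Finset.mem_powerset]
  intro c hc
  have hrow := (mem_iff_lt_rowLen (i := c.1) (j := c.2)).1 hc
  have hcol := (mem_iff_lt_colLen (i := c.1) (j := c.2)).1 hc
  have := μ.rowLen_le_card c.1
  have := μ.colLen_le_card c.2
  simp only [Finset.mem_product, Finset.mem_range]
  omega

end YoungDiagram

open YoungDiagram

theorem lt_diagLen_iff {μ : YoungDiagram} {i : ℕ} : i < diagLen μ ↔ (i, i) ∈ μ := by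
  constructor
  · intro hi
    by_contra hmem
    have hsub : ((Finset.range (μ.card + 1)).filter fun j => (j, j) ∈ μ) ⊆ Finset.range i :=
      fun j hj => Finset.mem_range.2 <| lt_of_not_ge fun hij =>
        hmem (μ.up_left_mem hij hij (Finset.mem_filter.1 hj).2)
    have := Finset.card_le_card hsub
    rw [Finset.card_range] at this
    exact absurd hi (not_lt.2 this)
  · intro hmem
    have hsub :
        Finset.range (i + 1) ⊆ (Finset.range (μ.card + 1)).filter fun j => (j, j) ∈ μ := by
      intro j hj
      have hji : j ≤ i := Nat.lt_succ_iff.1 (Finset.mem_range.1 hj)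
      have hj : (j, j) ∈ μ := μ.up_left_mem hji hji hmem
      have := mem_iff_lt_rowLen.1 hj
      have := μ.rowLen_le_card j
      exact Finset.mem_filter.2 ⟨Finset.mem_range.2 (by omega), hj⟩
    have := Finset.card_le_card hsub
    rw [Finset.card_range] at this
    exact this

-- `a^*_{j+1} / n`; the zero extension makes `frobRow μ` antitone on all of `ℕ`.
noncomputable def frobRow (μ : YoungDiagram) (j : ℕ) : ℝ :=
  if j < diagLen μ then ((μ.rowLen j : ℝ) - j - 1/2) / μ.card else 0

noncomputable def frobCol (μ : YoungDiagram) (j : ℕ) : ℝ :=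
  if j < diagLen μ then ((μ.colLen j : ℝ) - j - 1/2) / μ.card else 0

section Frobenius

variable (μ : YoungDiagram)

theorem frobRow_of_diagLen_le {j : ℕ} (hj : diagLen μ ≤ j) : frobRow μ j = 0 :=
  if_neg (not_lt.2 hj)

theorem frobRow_nonneg (j : ℕ) : 0 ≤ frobRow μ j := by
  unfold frobRow
  split_ifs with hj
  · have : (j : ℝ) + 1 ≤ μ.rowLen j := by
      exact_mod_cast mem_iff_lt_rowLen.1 (lt_diagLen_iff.1 hj)
    exact div_nonneg (by linarith) (Nat.cast_nonneg _)
  · exact le_rfl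

theorem frobCol_nonneg (j : ℕ) : 0 ≤ frobCol μ j := by
  unfold frobCol
  split_ifs with hj
  · have : (j : ℝ) + 1 ≤ μ.colLen j := by
      exact_mod_cast mem_iff_lt_colLen.1 (lt_diagLen_iff.1 hj)
    exact div_nonneg (by linarith) (Nat.cast_nonneg _)
  · exact le_rfl

theorem frobRow_antitone : Antitone (frobRow μ) := by
  intro j j' hjj'
  by_cases hj' : j' < diagLen μ
  · have hrow : (μ.rowLen j' : ℝ) ≤ μ.rowLen j := by exact_mod_cast μ.rowLen_anti j j' hjj'
    have hjj'R : (j : ℝ) ≤ j' := by exact_mod_cast hjj'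
    rw [frobRow, frobRow, if_pos hj', if_pos (hjj'.trans_lt hj')]
    exact div_le_div_of_nonneg_right (by linarith) (Nat.cast_nonneg _)
  · rw [frobRow, if_neg hj']
    exact frobRow_nonneg μ j

theorem sum_range_frobRow_le_one (m : ℕ) : ∑ j ∈ Finset.range m, frobRow μ j ≤ 1 := by
  have hterm : ∀ j, frobRow μ j ≤ μ.rowLen j / μ.card := by
    intro j
    unfold frobRow
    split_ifs
    · exact div_le_div_of_nonneg_right (by linarith [(Nat.cast_nonneg j : (0 : ℝ) ≤ j)])
        (Nat.cast_nonneg _)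
    · positivity
  calc ∑ j ∈ Finset.range m, frobRow μ j
      ≤ ∑ j ∈ Finset.range m, (μ.rowLen j : ℝ) / μ.card :=
        Finset.sum_le_sum fun j _ => hterm j
    _ = (∑ j ∈ Finset.range m, μ.rowLen j : ℕ) / μ.card := by
      rw [← Finset.sum_div]; push_cast; rfl
    _ ≤ 1 := div_le_one_of_le₀ (by exact_mod_cast μ.sum_range_rowLen_le_card m)
      (Nat.cast_nonneg _)

theorem abs_rowLen_div_card_sub_frobRow_le (i : ℕ) :
    |(μ.rowLen i : ℝ) / μ.card - frobRow μ i| ≤ (i + 1) / μ.card := by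
  unfold frobRow
  split_ifs with hi
  · rw [← sub_div, sub_sub, sub_sub_cancel, abs_of_nonneg (by positivity)]
    exact div_le_div_of_nonneg_right (by linarith) (Nat.cast_nonneg _)
  · have : μ.rowLen i ≤ i := not_lt.1 fun h => hi (lt_diagLen_iff.2 (mem_iff_lt_rowLen.2 h))
    rw [sub_zero, abs_of_nonneg (by positivity)]
    exact div_le_div_of_nonneg_right (by exact_mod_cast this.trans (Nat.le_succ i))
      (Nat.cast_nonneg _)

theorem pObs_div_card_pow (k : ℕ) :
    pObs k μ / (μ.card : ℝ) ^ k =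
      ∑ j ∈ Finset.range (diagLen μ), (frobRow μ j ^ k - (-frobCol μ j) ^ k) := by
  rw [pObs, Finset.sum_div]
  refine Finset.sum_congr rfl fun j hj => ?_
  rw [frobRow, frobCol, if_pos (Finset.mem_range.1 hj), if_pos (Finset.mem_range.1 hj),
    sub_div, div_pow, ← neg_div, div_pow]

theorem pObs_div_card_pow_le {k : ℕ} (hk : Even k) :
    pObs k μ / (μ.card : ℝ) ^ k ≤ ∑ j ∈ Finset.range (diagLen μ), frobRow μ j ^ k := by
  rw [pObs_div_card_pow]
  exact Finset.sum_le_sum fun j _ => sub_le_self _ (hk.pow_nonneg _)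

theorem sum_frobRow_pow_le_pObs_div_card_pow {k : ℕ} (hk : Odd k) :
    ∑ j ∈ Finset.range (diagLen μ), frobRow μ j ^ k ≤ pObs k μ / (μ.card : ℝ) ^ k := by
  rw [pObs_div_card_pow]
  refine Finset.sum_le_sum fun j _ => ?_
  rw [hk.neg_pow, sub_neg_eq_add]
  exact le_add_of_nonneg_right (pow_nonneg (frobCol_nonneg μ j) k)

theorem pObs_div_card_pow_sub_sum_le {k : ℕ} (hk : Even (k + 1)) (i : ℕ) :
    pObs (k + 1) μ / (μ.card : ℝ) ^ (k + 1) - ∑ j ∈ Finset.range i, frobRow μ j ^ (k + 1)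
      ≤ frobRow μ i ^ k := by
  set m := diagLen μ + i + 1
  have htail : ∑ j ∈ Finset.Ico i m, frobRow μ j ^ (k + 1) ≤ frobRow μ i ^ k := by
    refine sum_Ico_pow_succ_le (frobRow_nonneg μ) (frobRow_antitone μ) ?_ k
    refine le_trans ?_ (sum_range_frobRow_le_one μ m)
    exact Finset.sum_le_sum_of_subset_of_nonneg
      (fun j hj => Finset.mem_range.2 (Finset.mem_Ico.1 hj).2) fun j _ _ => frobRow_nonneg μ j
  have hextend : ∑ j ∈ Finset.range (diagLen μ), frobRow μ j ^ (k + 1)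
      ≤ ∑ j ∈ Finset.range m, frobRow μ j ^ (k + 1) :=
    Finset.sum_le_sum_of_subset_of_nonneg (Finset.range_subset_range.2 (by omega))
      fun j _ _ => pow_nonneg (frobRow_nonneg μ j) _
  rw [← Finset.sum_range_add_sum_Ico _ (show i ≤ m by omega)] at hextend
  linarith [pObs_div_card_pow_le μ hk]

theorem frobRow_pow_le_pObs_div_card_pow_sub_sum {k : ℕ} (hk : Odd k) (i : ℕ) :
    frobRow μ i ^ k
      ≤ pObs k μ / (μ.card : ℝ) ^ k - ∑ j ∈ Finset.range i, frobRow μ j ^ k := by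
  set m := diagLen μ + i + 1
  have hhead : frobRow μ i ^ k ≤ ∑ j ∈ Finset.Ico i m, frobRow μ j ^ k :=
    Finset.single_le_sum (f := fun j => frobRow μ j ^ k)
      (fun j _ => pow_nonneg (frobRow_nonneg μ j) k) (Finset.mem_Ico.2 ⟨le_rfl, by omega⟩)
  have hextend : ∑ j ∈ Finset.range (diagLen μ), frobRow μ j ^ k
      = ∑ j ∈ Finset.range m, frobRow μ j ^ k :=
    Finset.sum_subset (Finset.range_subset_range.2 (by omega)) fun j _ hj => by
      rw [frobRow_of_diagLen_le μ (not_lt.1 (Finset.mem_range.not.1 hj)), zero_pow hk.pos.ne']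
  rw [← Finset.sum_range_add_sum_Ico _ (show i ≤ m by omega)] at hextend
  linarith [sum_frobRow_pow_le_pObs_div_card_pow μ hk]

end Frobenius

theorem qint_nonneg {q : ℝ} (hq : 0 ≤ q) (m : ℕ) : 0 ≤ qint q m := by
  unfold qint
  rcases lt_trichotomy q 1 with h | rfl | h
  · exact div_nonneg_of_nonpos (by linarith [pow_le_one₀ (n := m) hq h.le]) (by linarith)
  · simp
  · exact div_nonneg (by linarith [one_le_pow₀ (n := m) h.le]) (by linarith)

theorem qPlancherel_nonneg {q : ℝ} (hq : 0 ≤ q) (μ : YoungDiagram) : 0 ≤ qPlancherel q μ :=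
  div_nonneg (by positivity) (Finset.prod_nonneg fun _ _ => qint_nonneg hq _)

theorem tendsto_frobRow_of_tendsto_pObs {q : ℝ} (hq0 : 0 < q) (hq1 : q < 1) {α : Type*}
    {l : Filter α} {μ : α → YoungDiagram}
    (h : ∀ k, 1 ≤ k → Tendsto (fun a => pObs k (μ a) / ((μ a).card : ℝ) ^ k) l
      (𝓝 ((1 - q) ^ k / (1 - q ^ k)))) (i : ℕ) :
    Tendsto (fun a => frobRow (μ a) i) l (𝓝 ((1 - q) * q ^ i)) := by
  refine Nat.strong_induction_on i fun i ih => ?_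
  set c := (1 - q) * q ^ i
  have hc : 0 < c := mul_pos (sub_pos.2 hq1) (pow_pos hq0 i)
  have htail : ∀ k, 1 ≤ k → Tendsto (fun a => pObs k (μ a) / ((μ a).card : ℝ) ^ k
      - ∑ j ∈ Finset.range i, frobRow (μ a) j ^ k) l (𝓝 (c ^ k / (1 - q ^ k))) := by
    intro k hk
    rw [← div_sub_sum_geom_pow (pow_lt_one₀ hq0.le hq1 (by omega)).ne i]
    exact (h k hk).sub (tendsto_finsetSum _ fun j hj => (ih j (Finset.mem_range.1 hj)).pow k)
  refine tendsto_order.2 ⟨fun r hr => ?_, fun s hs => ?_⟩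
  · rcases lt_or_ge r 0 with hr0 | hr0
    · exact Eventually.of_forall fun a => hr0.trans_le (frobRow_nonneg _ _)
    obtain ⟨k, hk, hrk⟩ := exists_odd_pow_lt_pow_succ hr0 hr
    have hlim : r ^ k < c ^ (k + 1) / (1 - q ^ (k + 1)) :=
      hrk.trans_le (le_div_self (pow_nonneg hc.le _)
        (sub_pos.2 (pow_lt_one₀ hq0.le hq1 (by omega))) (by linarith [pow_nonneg hq0.le (k + 1)]))
    filter_upwards [(htail (k + 1) (by omega)).eventually_const_lt hlim] with a ha
    exact lt_of_pow_lt_pow_left₀ k (frobRow_nonneg _ _)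
      (ha.trans_le (pObs_div_card_pow_sub_sum_le _ hk.add_one i))
  · obtain ⟨k, hk, hks⟩ := exists_odd_pow_div_lt hc.le hs hq0.le hq1
    filter_upwards [(htail k hk.pos).eventually_lt_const hks] with a ha
    exact lt_of_pow_lt_pow_left₀ k (hc.le.trans hs.le)
      ((frobRow_pow_le_pObs_div_card_pow_sub_sum _ hk i).trans_lt ha)

theorem exists_abs_rowLen_div_card_sub_lt {q : ℝ} (hq0 : 0 < q) (hq1 : q < 1) (i : ℕ) {ε : ℝ}
    (hε : 0 < ε) :
    ∃ K : ℕ, ∃ δ > 0, ∃ N : ℕ, ∀ μ : YoungDiagram, N ≤ μ.card →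
      (∀ k ∈ Finset.Icc 1 K,
        |pObs k μ / (μ.card : ℝ) ^ k - (1 - q) ^ k / (1 - q ^ k)| < δ) →
      |(μ.rowLen i : ℝ) / μ.card - (1 - q) * q ^ i| < ε := by
  by_contra! hbad
  choose μ hcard hmom hrow using fun N : ℕ => hbad N (1 / (N + 1)) Nat.one_div_pos_of_nat N
  have hmoments : ∀ k, 1 ≤ k → Tendsto (fun N => pObs k (μ N) / ((μ N).card : ℝ) ^ k)
      atTop (𝓝 ((1 - q) ^ k / (1 - q ^ k))) := by
    intro k hk
    rw [tendsto_iff_norm_sub_tendsto_zero]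
    refine squeeze_zero' (Eventually.of_forall fun _ => norm_nonneg _) ?_
      tendsto_one_div_add_atTop_nhds_zero_nat
    filter_upwards [eventually_ge_atTop k] with N hN
    exact (hmom N k (Finset.mem_Icc.2 ⟨hk, hN⟩)).le
  have hcardTop : Tendsto (fun N => ((μ N).card : ℝ)) atTop atTop :=
    tendsto_natCast_atTop_atTop.comp (tendsto_atTop_mono hcard tendsto_id)
  have hgap :
      Tendsto (fun N => ((μ N).rowLen i : ℝ) / (μ N).card - frobRow (μ N) i) atTop (𝓝 0) :=
    squeeze_zero_norm (fun N => abs_rowLen_div_card_sub_frobRow_le (μ N) i)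
      (tendsto_const_nhds.div_atTop hcardTop)
  have hrowLen : Tendsto (fun N => ((μ N).rowLen i : ℝ) / (μ N).card) atTop
      (𝓝 ((1 - q) * q ^ i)) := by
    simpa using hgap.add (tendsto_frobRow_of_tendsto_pObs hq0 hq1 hmoments i)
  obtain ⟨N, hN⟩ := Metric.tendsto_atTop.1 hrowLen ε hε
  exact (hrow N).not_gt (hN N le_rfl)

/-- For random Young diagrams of size `n` under the `q`-Plancherel measure (`0 < q < 1`):
if for every `k ≥ 1` the normalized power sums `p_k(λ)/n^k` converge in probability to
`(1-q)^k/(1-q^k)`, then for every `i ≥ 1` the normalized row lengths `λ_i/n` converge in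
probability to `(1-q) q^(i-1)` (rows 0-indexed below via `rowLen`).  Probabilities of
events are sums of `M_{n,q}` over the diagrams of size `n` in the event. -/
theorem stmt_15 (q : ℝ) (hq0 : 0 < q) (hq1 : q < 1)
    (hyp : ∀ k : ℕ, 1 ≤ k → ∀ ε : ℝ, 0 < ε →
      Tendsto (fun n : ℕ =>
          ∑' μ : {μ : YoungDiagram // μ.card = n ∧
              ε ≤ |pObs k μ / (n : ℝ) ^ k - (1 - q) ^ k / (1 - q ^ k)|},
            qPlancherel q (μ : YoungDiagram))
        atTop (nhds 0)) :
    ∀ i : ℕ, ∀ ε : ℝ, 0 < ε →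
      Tendsto (fun n : ℕ =>
          ∑' μ : {μ : YoungDiagram // μ.card = n ∧
              ε ≤ |((μ : YoungDiagram).rowLen i : ℝ) / (n : ℝ) - (1 - q) * q ^ i|},
            qPlancherel q (μ : YoungDiagram))
        atTop (nhds 0) := by
  intro i ε hε
  obtain ⟨K, δ, hδ, N, hclose⟩ := exists_abs_rowLen_div_card_sub_lt hq0 hq1 i hε
  have hbound := tendsto_finsetSum (Finset.Icc 1 K) fun k hk => hyp k (Finset.mem_Icc.1 hk).1 δ hδ
  rw [Finset.sum_const_zero] at hbound
  refine squeeze_zero'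
    (Eventually.of_forall fun n => tsum_nonneg fun μ => qPlancherel_nonneg hq0.le _)
    (eventually_atTop.2 ⟨N, fun n hn => ?_⟩) hbound
  refine tsum_subtype_le_sum_tsum_subtype (qPlancherel_nonneg hq0.le) (Finset.Icc 1 K)
    (fun k _ => (finite_setOf_card_eq n).subset fun _ hμ => hμ.1) ?_
  rintro μ ⟨rfl, hrow⟩
  by_contra! hnot
  exact hrow.not_gt (hclose μ hn fun k hk => hnot k hk rfl)
end
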